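/- arXiv:1505.00731 — 7 statements merged into one kernel-verified Lean document; each statement's English description precedes it below -/
import Mathlib

section
/- Let U be an optimal machine. Then for every partial computable function A : List Bool →. Bool, the liminf of the error rate is positive: there exist a real ε > 0 and N such that ε_n(A) ≥ ε for all n ≥ N (so liminf_{n→∞} ε_n(A) > 0). -/
open Filter

/-- Kolmogorov complexity of `m` relative to machine `U` (∞ if `m` has no description). -/
noncomputable def KU (U : List Bool →. ℕ) (m : ℕ) : ℕ∞ :=
  sInf {l : ℕ∞ | ∃ p : List Bool, m ∈ U p ∧ (p.length : ℕ∞) = l}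

/-- `U` is an optimal machine. -/
def OptimalMachine (U : List Bool →. ℕ) : Prop :=
  Partrec U ∧ ∀ V : List Bool →. ℕ, Partrec V → ∃ c : ℕ, ∀ m, KU U m ≤ KU V m + (c : ℕ∞)

/-- A total function on strings is length-bounded if it increases length by at most a constant. -/
def LengthBounded (h : List Bool → List Bool) : Prop :=
  ∃ c : ℕ, ∀ x, (h x).length ≤ x.length + c

/-- `U` is an effectively optimal machine. -/
def EffOptimal (U : List Bool →. ℕ) : Prop :=
  Partrec U ∧ ∀ V : List Bool →. ℕ, Partrec V →
    ∃ h : List Bool → List Bool, Computable h ∧ LengthBounded h ∧ ∀ x, U (h x) = V x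

/-- `x` is an error point of `A` as an approximate decision procedure for `dom U`. -/
def ErrorPoint (U : List Bool →. ℕ) (A : List Bool →. Bool) (x : List Bool) : Prop :=
  ¬(((U x).Dom ∧ true ∈ A x) ∨ (¬(U x).Dom ∧ false ∈ A x))

/-- fraction of error points among strings of length at most `n`. -/
noncomputable def errRate (U : List Bool →. ℕ) (A : List Bool →. Bool) (n : ℕ) : ℝ :=
  (Set.ncard {x : List Bool | x.length ≤ n ∧ ErrorPoint U A x} : ℝ) / 2 ^ (n + 1)

def LeftTotal (U : List Bool →. ℕ) : Prop :=
  ∀ x y : List Bool, x.length = y.length → List.Lex (· < ·) x y → (U y).Dom → (U x).Dom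

noncomputable def haltRate (U : List Bool →. ℕ) (n : ℕ) : ℝ :=
  (Set.ncard {x : List Bool | x.length ≤ n ∧ (U x).Dom} : ℝ) / 2 ^ (n + 1)

def MOptimal (S : Set (List Bool)) : Prop :=
  REPred (· ∈ S) ∧ ∀ W : Set (List Bool), REPred (· ∈ W) →
    ∃ h : List Bool → List Bool, Computable h ∧ LengthBounded h ∧ ∀ x, x ∈ W ↔ h x ∈ S

def SimpleSet (S : Set (List Bool)) : Prop :=
  REPred (· ∈ S) ∧ Sᶜ.Infinite ∧
    ∀ W : Set (List Bool), REPred (· ∈ W) → W ⊆ Sᶜ → W.Finite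

noncomputable def compTime (c : Nat.Partrec.Code) (p : List Bool) : ℕ :=
  sInf {k : ℕ | (Nat.Partrec.Code.evaln k c (Encodable.encode p)).isSome}

noncomputable def BB (U : List Bool →. ℕ) (c : Nat.Partrec.Code) (n : ℕ) : ℕ :=
  sSup {t : ℕ | ∃ p : List Bool, p.length ≤ n ∧ (U p).Dom ∧ t = compTime c p}

noncomputable def Bfun (U : List Bool →. ℕ) (n : ℕ) : ℕ :=
  sSup {m : ℕ | KU U m ≤ (n : ℕ∞)}


/-!
Run `U` and `A` in parallel. At stage `t` a string is undecided if `U` has not yet halted on it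
and `A` has not yet answered `false`; undecided strings only disappear as `t` grows. Fix `k` and
`n = k + 2c + 1`. If at every stage at least half of `2^k` strings of length `≤ n` are
undecided, then those undecided at all stages are error points (`U` diverges, `A` never says
`false`). Otherwise a machine `V` waits for the first stage where fewer are undecided and then,
on the `2^k` inputs `1^c 0 r` with `|r| = k`, outputs `2^k` distinct values that `U` has not
produced by that stage on strings of length `≤ n`. Since `V` reads `c` off its input, it may be
taken with `c` its own optimality constant, so `U` has programs of length `≤ n` for these values.
These programs halt only after that stage, so each is rejected by `A` (an error point) or is
still undecided, and fewer than half are undecided. Either way at least half of `2^k` strings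
of length `≤ n` are error points, a fraction at least `2^-(2c+3)` of all of them.
-/

open Encodable Nat.Partrec Nat.Partrec.Code

namespace ErrorRate

def stringsUpTo : ℕ → List (List Bool)
  | 0 => [[]]
  | n + 1 => [] :: ((stringsUpTo n).map (true :: ·) ++ (stringsUpTo n).map (false :: ·))

theorem mem_stringsUpTo {n : ℕ} {x : List Bool} : x ∈ stringsUpTo n ↔ x.length ≤ n := by
  induction n generalizing x with
  | zero => cases x <;> simp [stringsUpTo]
  | succ n ih =>
    rcases x with _ | ⟨b, x⟩
    · simp [stringsUpTo]
    · cases b <;> simp [stringsUpTo, ih]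

theorem nodup_stringsUpTo (n : ℕ) : (stringsUpTo n).Nodup := by
  induction n with
  | zero => simp [stringsUpTo]
  | succ n ih =>
    refine .cons (by simp) (.append (ih.map fun _ _ h => by simpa using h)
      (ih.map fun _ _ h => by simpa using h) ?_)
    simp [List.Disjoint]

theorem primrec_stringsUpTo : Primrec stringsUpTo := by
  have hcons (b : Bool) : Primrec (List.cons b) := Primrec.list_cons.comp (.const b) .id
  have hstep : Primrec₂ fun (_ : ℕ) (l : List (List Bool)) =>
      [] :: (l.map (true :: ·) ++ l.map (false :: ·)) :=
    (Primrec.list_cons.comp (.const [])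
      (Primrec.list_append.comp
        (Primrec.list_map Primrec.snd ((hcons true).comp₂ Primrec₂.right))
        (Primrec.list_map Primrec.snd ((hcons false).comp₂ Primrec₂.right)))).to₂
  refine (Primrec.nat_rec₁ [[]] hstep).of_eq fun n => ?_
  induction n with
  | zero => rfl
  | succ n ih => simp [stringsUpTo, ← ih]

theorem ncard_setOf_length_le_and (n : ℕ) (p : List Bool → Bool) :
    {x : List Bool | x.length ≤ n ∧ p x}.ncard = ((stringsUpTo n).filter p).length := by
  have : {x : List Bool | x.length ≤ n ∧ p x} = ↑((stringsUpTo n).filter p).toFinset := by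
    ext x
    simp [mem_stringsUpTo]
  rw [this, Set.ncard_coe_finset, List.toFinset_card_of_nodup ((nodup_stringsUpTo n).filter p)]

theorem ncard_setOf_length_eq (k : ℕ) : {r : List Bool | r.length = k}.ncard = 2 ^ k := by
  have e : {r : List Bool | r.length = k} ≃ List.Vector Bool k := Equiv.refl _
  rw [← Nat.card_coe_set_eq, Nat.card_congr e, Nat.card_eq_fintype_card, card_vector,
    Fintype.card_bool]

def fresh (L : List ℕ) (e : ℕ) : ℕ := L.sum + 1 + e

theorem fresh_not_mem (L : List ℕ) (e : ℕ) : fresh L e ∉ L := fun h => by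
  have := List.le_sum_of_mem h
  unfold fresh at this
  omega

theorem fresh_injective (L : List ℕ) : Function.Injective (fresh L) := fun _ _ h => by
  unfold fresh at h
  omega

theorem primrec_fresh : Primrec₂ fresh := by
  have hsum : Primrec (List.sum : List ℕ → ℕ) :=
    (Primrec.list_foldr .id (.const 0)
      (Primrec.nat_add.comp (Primrec.fst.comp .snd) (Primrec.snd.comp .snd)).to₂).of_eq
      fun L => by induction L <;> simp_all
  exact Primrec.nat_add.comp (Primrec.succ.comp (hsum.comp .fst)) .snd

theorem exists_code_eval_eq {σ : Type*} [Primcodable σ] {f : List Bool →. σ} (hf : Partrec f) :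
    ∃ c : Code, ∀ p, eval c (encode p) = (f p).map encode := by
  obtain ⟨c, hc⟩ := Code.exists_code.1 hf
  exact ⟨c, fun p => by simp [hc, encodek]⟩

theorem exists_mem_length_le_add {U V : List Bool →. ℕ} {c : ℕ}
    (hc : ∀ m, KU U m ≤ KU V m + c) {m : ℕ} {q : List Bool} (hq : m ∈ V q) :
    ∃ p, m ∈ U p ∧ p.length ≤ q.length + c := by
  have hle : KU U m ≤ q.length + c := (hc m).trans (by gcongr; exact sInf_le ⟨q, hq, rfl⟩)
  have hU : {l : ℕ∞ | ∃ p : List Bool, m ∈ U p ∧ (p.length : ℕ∞) = l}.Nonempty := by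
    by_contra h
    rw [Set.not_nonempty_iff_eq_empty] at h
    rw [KU, h, sInf_empty] at hle
    exact absurd hle (by simp)
  obtain ⟨p, hp, hlen⟩ := csInf_mem hU
  exact ⟨p, hp, by exact_mod_cast hlen.trans_le hle⟩

theorem primrec_evaln_encode (c : Code) :
    Primrec₂ fun (t : ℕ) (x : List Bool) => evaln t c (encode x) :=
  primrec_evaln.comp ((Primrec.fst.pair (.const c)).pair (Primrec.encode.comp .snd))

section Stages

variable (cU cA : Code)

def isUndecided (t : ℕ) (x : List Bool) : Bool :=
  evaln t cU (encode x) = Option.none ∧ evaln t cA (encode x) ≠ some (encode false)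

def undecidedSet (t n : ℕ) : Set (List Bool) := {x | x.length ≤ n ∧ isUndecided cU cA t x}

def undecidedCount (t n : ℕ) : ℕ := ((stringsUpTo n).filter (isUndecided cU cA t)).length

def haltedOutputs (t n : ℕ) : List ℕ := (stringsUpTo n).filterMap fun x => evaln t cU (encode x)

theorem finite_undecidedSet (t n : ℕ) : (undecidedSet cU cA t n).Finite :=
  (List.finite_length_le Bool n).subset fun _ hx => hx.1

theorem ncard_undecidedSet (t n : ℕ) :
    (undecidedSet cU cA t n).ncard = undecidedCount cU cA t n :=
  ncard_setOf_length_le_and n _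

theorem undecidedSet_antitone (n : ℕ) : Antitone fun t => undecidedSet cU cA t n := by
  intro t t' htt' x ⟨hx, hund⟩
  simp only [isUndecided, decide_eq_true_eq] at hund
  refine ⟨hx, decide_eq_true ⟨Option.eq_none_iff_forall_ne_some.mpr fun y hy => ?_,
    fun h => hund.2 (evaln_mono htt' h)⟩⟩
  simpa [hund.1] using evaln_mono htt' (Option.mem_def.mpr hy)

theorem evaln_eq_none_of_not_mem_haltedOutputs {t n m : ℕ} {x : List Bool} (hx : x.length ≤ n)
    (hm : m ∈ eval cU (encode x)) (hfresh : m ∉ haltedOutputs cU t n) :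
    evaln t cU (encode x) = Option.none := by
  rw [Option.eq_none_iff_forall_ne_some]
  intro y hy
  obtain rfl : y = m := Part.mem_unique (evaln_sound hy) hm
  exact hfresh (List.mem_filterMap.mpr ⟨x, mem_stringsUpTo.mpr hx, hy⟩)

theorem primrec_isUndecided : Primrec₂ (isUndecided cU cA) := by
  have hnone : PrimrecPred fun a : ℕ × List Bool => evaln a.1 cU (encode a.2) = Option.none :=
    PrimrecRel.comp Primrec.eq (primrec_evaln_encode cU) (.const _)
  have hfalse : PrimrecPred fun a : ℕ × List Bool =>
      evaln a.1 cA (encode a.2) = some (encode false) :=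
    PrimrecRel.comp Primrec.eq (primrec_evaln_encode cA) (.const _)
  exact (hnone.and hfalse.not).decide

theorem primrec_undecidedCount : Primrec₂ (undecidedCount cU cA) := by
  have hguard : Primrec₂ fun (p : ℕ × ℕ) (x : List Bool) =>
      Option.guard (isUndecided cU cA p.1) x :=
    Primrec.ite (PrimrecRel.comp Primrec.eq
        ((primrec_isUndecided cU cA).comp (Primrec.fst.comp .fst) .snd) (.const true))
      (Primrec.option_some.comp .snd) (.const none)
  refine (Primrec.list_length.comp
    (Primrec.listFilterMap (primrec_stringsUpTo.comp .snd) hguard)).to₂.of_eq fun t n => ?_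
  simp [undecidedCount, List.filterMap_eq_filter]

theorem primrec_haltedOutputs : Primrec₂ (haltedOutputs cU) :=
  (Primrec.listFilterMap (primrec_stringsUpTo.comp .snd)
    ((primrec_evaln_encode cU).comp (Primrec.fst.comp .fst) .snd).to₂).to₂

end Stages

def unaryPrefix (q : List Bool) : ℕ := q.idxOf false

def payload (q : List Bool) : List Bool := q.drop (unaryPrefix q + 1)

theorem unaryPrefix_replicate_append (d : ℕ) (r : List Bool) :
    unaryPrefix (List.replicate d true ++ false :: r) = d := by
  induction d with
  | zero => simp [unaryPrefix]
  | succ d ih => simpa [unaryPrefix, List.replicate_succ, List.idxOf_cons] using ih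

theorem payload_replicate_append (d : ℕ) (r : List Bool) :
    payload (List.replicate d true ++ false :: r) = r := by
  simp [payload, unaryPrefix_replicate_append, List.drop_append]

/-- On input `1^d 0 r` it sets `n = |r| + 2d + 1` (the input length plus `d`), waits for a stage
`t` at which fewer than `2^|r| / 2` strings of length `≤ n` are undecided, and then outputs a
number, injective in `r`, that `U` has not produced on such strings by stage `t`. -/
def witnessMachine (cU cA : Code) : List Bool →. ℕ := fun q =>
  (Nat.rfind fun t => Part.some (decide
      (2 * undecidedCount cU cA t (q.length + unaryPrefix q) < 2 ^ (payload q).length))).map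
    fun t => fresh (haltedOutputs cU t (q.length + unaryPrefix q)) (encode (payload q))

theorem partrec_witnessMachine (cU cA : Code) : Partrec (witnessMachine cU cA) := by
  have hprefix : Primrec unaryPrefix := Primrec.list_idxOf.comp (.const false) .id
  have hpayload : Primrec payload := Primrec.list_drop.comp (Primrec.succ.comp hprefix) .id
  have hn : Primrec fun q : List Bool => q.length + unaryPrefix q :=
    Primrec.nat_add.comp Primrec.list_length hprefix
  have hpow : Primrec₂ ((· ^ ·) : ℕ → ℕ → ℕ) := Primrec₂.unpaired'.1 Nat.Primrec.pow
  have hstop : Primrec₂ fun (q : List Bool) (t : ℕ) => decide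
      (2 * undecidedCount cU cA t (q.length + unaryPrefix q) < 2 ^ (payload q).length) :=
    (PrimrecRel.comp Primrec.nat_lt
      (Primrec.nat_mul.comp (.const 2)
        ((primrec_undecidedCount cU cA).comp .snd (hn.comp .fst)))
      (hpow.comp (.const 2) (Primrec.list_length.comp (hpayload.comp .fst)))).decide
  have hout : Primrec₂ fun (q : List Bool) (t : ℕ) =>
      fresh (haltedOutputs cU t (q.length + unaryPrefix q)) (encode (payload q)) :=
    primrec_fresh.comp ((primrec_haltedOutputs cU).comp .snd (hn.comp .fst))
      (Primrec.encode.comp (hpayload.comp .fst))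
  exact (Partrec.rfind hstop.to_comp.partrec₂).map hout.to_comp

theorem fresh_mem_witnessMachine {cU cA : Code} {d k n : ℕ} {r : List Bool} (hr : r.length = k)
    (hn : n = k + 2 * d + 1) (h : ∃ t, 2 * undecidedCount cU cA t n < 2 ^ k) :
    fresh (haltedOutputs cU (Nat.find h) n) (encode r) ∈
      witnessMachine cU cA (List.replicate d true ++ false :: r) := by
  have hlen : (List.replicate d true ++ false :: r).length +
      unaryPrefix (List.replicate d true ++ false :: r) = n := by
    simp [unaryPrefix_replicate_append]
    omega
  simp only [witnessMachine, hlen, payload_replicate_append, hr, Part.mem_map_iff]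
  refine ⟨Nat.find h, Nat.mem_rfind.mpr ⟨by simpa using Nat.find_spec h, fun hm => ?_⟩, rfl⟩
  simpa using Nat.find_min h hm

theorem exists_subset_forall_of_antitone {α : Type*} {S : ℕ → Set α} (hS : Antitone S)
    (h0 : (S 0).Finite) : ∃ t₀, ∀ t, S t₀ ⊆ S t := by
  obtain ⟨t₀, ht₀⟩ := Nat.sInf_mem (Set.range_nonempty fun t => (S t).ncard)
  refine ⟨t₀, fun t => ?_⟩
  rcases le_total t t₀ with h | h
  · exact hS h
  · refine (Set.eq_of_subset_of_ncard_le (hS h) ?_ (h0.subset (hS t₀.zero_le))).symm.subset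
    exact ht₀.trans_le (Nat.sInf_le ⟨t, rfl⟩)

def errorSet (U : List Bool →. ℕ) (A : List Bool →. Bool) (n : ℕ) : Set (List Bool) :=
  {x | x.length ≤ n ∧ ErrorPoint U A x}

theorem finite_errorSet (U : List Bool →. ℕ) (A : List Bool →. Bool) (n : ℕ) :
    (errorSet U A n).Finite :=
  (List.finite_length_le Bool n).subset fun _ hx => hx.1

section ErrorPoints

variable {U : List Bool →. ℕ} {A : List Bool →. Bool} {cU cA : Code} {x : List Bool}

theorem errorPoint_of_dom_of_false_mem (hU : (U x).Dom) (hA : false ∈ A x) :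
    ErrorPoint U A x := by
  rintro (⟨-, htrue⟩ | ⟨hnd, -⟩)
  · exact Bool.false_ne_true (Part.mem_unique hA htrue)
  · exact hnd hU

theorem errorPoint_of_forall_isUndecided (hcU : ∀ p, eval cU (encode p) = U p)
    (hcA : ∀ p, eval cA (encode p) = (A p).map encode) (h : ∀ t, isUndecided cU cA t x) :
    ErrorPoint U A x := by
  simp only [isUndecided, decide_eq_true_eq] at h
  rintro (⟨hdom, -⟩ | ⟨-, hfalse⟩)
  · obtain ⟨m, hm⟩ := Part.dom_iff_mem.mp hdom
    obtain ⟨t, ht⟩ := evaln_complete.mp (show m ∈ eval cU (encode x) by rwa [hcU])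
    simp [(h t).1] at ht
  · obtain ⟨t, ht⟩ := evaln_complete.mp
      (show encode false ∈ eval cA (encode x) by rw [hcA]; exact Part.mem_map _ hfalse)
    exact (h t).2 ht

theorem errorPoint_or_isUndecided (hcA : ∀ p, eval cA (encode p) = (A p).map encode) {t : ℕ}
    (hdom : (U x).Dom) (hnone : evaln t cU (encode x) = Option.none) :
    ErrorPoint U A x ∨ isUndecided cU cA t x := by
  by_cases hfalse : evaln t cA (encode x) = some (encode false)
  · have := evaln_sound hfalse
    rw [hcA, Part.mem_map_iff] at this
    obtain ⟨b, hb, henc⟩ := this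
    rw [encode_injective henc] at hb
    exact .inl (errorPoint_of_dom_of_false_mem hdom hb)
  · exact .inr (by simpa [isUndecided, hnone] using hfalse)

theorem two_pow_le_of_forall_undecidedCount (hcU : ∀ p, eval cU (encode p) = U p)
    (hcA : ∀ p, eval cA (encode p) = (A p).map encode) {k n : ℕ}
    (h : ∀ t, 2 ^ k ≤ 2 * undecidedCount cU cA t n) : 2 ^ k ≤ 2 * (errorSet U A n).ncard := by
  obtain ⟨t₀, ht₀⟩ := exists_subset_forall_of_antitone (undecidedSet_antitone cU cA n)
    (finite_undecidedSet cU cA 0 n)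
  have hsub : undecidedSet cU cA t₀ n ⊆ errorSet U A n := fun x hx =>
    ⟨hx.1, errorPoint_of_forall_isUndecided hcU hcA fun t => (ht₀ t hx).2⟩
  calc 2 ^ k ≤ 2 * undecidedCount cU cA t₀ n := h t₀
    _ = 2 * (undecidedSet cU cA t₀ n).ncard := by rw [ncard_undecidedSet]
    _ ≤ 2 * (errorSet U A n).ncard :=
      Nat.mul_le_mul_left 2 (Set.ncard_le_ncard hsub (finite_errorSet U A n))

theorem two_pow_le_of_exists_undecidedCount (hcU : ∀ p, eval cU (encode p) = U p)
    (hcA : ∀ p, eval cA (encode p) = (A p).map encode) {c k n : ℕ}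
    (hc : ∀ m, KU U m ≤ KU (witnessMachine cU cA) m + c) (hn : n = k + 2 * c + 1)
    (h : ∃ t, 2 * undecidedCount cU cA t n < 2 ^ k) : 2 ^ k ≤ 2 * (errorSet U A n).ncard := by
  set t₀ := Nat.find h
  have hprog : ∀ r ∈ {r : List Bool | r.length = k},
      ∃ p, fresh (haltedOutputs cU t₀ n) (encode r) ∈ U p ∧ p.length ≤ n := by
    intro r (hr : r.length = k)
    obtain ⟨p, hp, hlen⟩ := exists_mem_length_le_add hc (fresh_mem_witnessMachine hr hn h)
    simp only [List.length_append, List.length_replicate, List.length_cons] at hlen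
    exact ⟨p, hp, by omega⟩
  choose! prog hprog_mem hprog_len using hprog
  have hmaps : ∀ r ∈ {r : List Bool | r.length = k},
      prog r ∈ errorSet U A n ∪ undecidedSet cU cA t₀ n := by
    intro r hr
    have hnone := evaln_eq_none_of_not_mem_haltedOutputs cU (hprog_len r hr)
      (by rw [hcU]; exact hprog_mem r hr) (fresh_not_mem _ _)
    exact (errorPoint_or_isUndecided hcA (Part.dom_iff_mem.mpr ⟨_, hprog_mem r hr⟩) hnone).imp
      (⟨hprog_len r hr, ·⟩) (⟨hprog_len r hr, ·⟩)
  have hinj : Set.InjOn prog {r | r.length = k} := fun r₁ h₁ r₂ h₂ he =>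
    encode_injective <| fresh_injective _ <|
      Part.mem_unique (he ▸ hprog_mem r₁ h₁) (hprog_mem r₂ h₂)
  have hcover := Set.ncard_le_ncard_of_injOn prog hmaps hinj
    ((finite_errorSet U A n).union (finite_undecidedSet cU cA t₀ n))
  have hunion := Set.ncard_union_le (errorSet U A n) (undecidedSet cU cA t₀ n)
  have hfew : 2 * (undecidedSet cU cA t₀ n).ncard < 2 ^ k := by
    rw [ncard_undecidedSet]
    exact Nat.find_spec h
  rw [ncard_setOf_length_eq] at hcover
  omega

theorem two_pow_le_two_mul_ncard_errorSet (hcU : ∀ p, eval cU (encode p) = U p)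
    (hcA : ∀ p, eval cA (encode p) = (A p).map encode) {c : ℕ}
    (hc : ∀ m, KU U m ≤ KU (witnessMachine cU cA) m + c) (k : ℕ) :
    2 ^ k ≤ 2 * (errorSet U A (k + 2 * c + 1)).ncard := by
  by_cases h : ∃ t, 2 * undecidedCount cU cA t (k + 2 * c + 1) < 2 ^ k
  · exact two_pow_le_of_exists_undecidedCount hcU hcA hc rfl h
  · simp only [not_exists, not_lt] at h
    exact two_pow_le_of_forall_undecidedCount hcU hcA h

end ErrorPoints

end ErrorRate

/-- for an optimal machine `U`, every partial computable approximate
decision procedure `A` for the halting problem has liminf error rate bounded away from 0. -/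
theorem liminf_error_rate_pos (U : List Bool →. ℕ) (hU : OptimalMachine U)
    (A : List Bool →. Bool) (hA : Partrec A) :
    ∃ ε : ℝ, 0 < ε ∧ ∃ N : ℕ, ∀ n ≥ N, ε ≤ errRate U A n := by
  obtain ⟨cU, hcU⟩ := ErrorRate.exists_code_eval_eq hU.1
  obtain ⟨cA, hcA⟩ := ErrorRate.exists_code_eval_eq hA
  obtain ⟨c, hc⟩ := hU.2 _ (ErrorRate.partrec_witnessMachine cU cA)
  refine ⟨1 / 2 ^ (2 * c + 3), by positivity, 2 * c + 1, fun n hn => ?_⟩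
  obtain ⟨k, rfl⟩ : ∃ k, n = k + 2 * c + 1 := ⟨n - (2 * c + 1), by omega⟩
  have hcount : (2 : ℝ) ^ k ≤ 2 * (ErrorRate.errorSet U A (k + 2 * c + 1)).ncard := by
    exact_mod_cast ErrorRate.two_pow_le_two_mul_ncard_errorSet
      (fun p => (hcU p).trans (Part.map_id' (fun _ => rfl) _)) hcA hc k
  change 1 / 2 ^ (2 * c + 3) ≤
    ((ErrorRate.errorSet U A (k + 2 * c + 1)).ncard : ℝ) / 2 ^ (k + 2 * c + 1 + 1)
  rw [div_le_div_iff₀ (by positivity) (by positivity), one_mul]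
  calc (2 : ℝ) ^ (k + 2 * c + 1 + 1) = 2 ^ k * 2 ^ (2 * c + 2) := by ring
    _ ≤ 2 * (ErrorRate.errorSet U A (k + 2 * c + 1)).ncard * 2 ^ (2 * c + 2) := by gcongr
    _ = (ErrorRate.errorSet U A (k + 2 * c + 1)).ncard * 2 ^ (2 * c + 3) := by ring
end

section
/- Let U be an optimal machine. There exists a real ε > 0 such that for every partial computable function A : List Bool →. Bool, the error rate satisfies ε_n(A) ≥ ε for infinitely many n (so limsup_{n→∞} ε_n(A) ≥ ε). -/
open Filter

/-!
Let `c` be the optimality constant of `U` with respect to the adversary machine `V` below and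
put `a = c + 1`. On input `0^a 1 r` with `|r| = L`, `V` works at level `n = L + 2 ^ a`, reads the
code of a candidate decider `A` off `n.unpair.1` and an offset `s < 2 ^ L` off `r`. Dovetailing `U`
and `A` on all strings of length `≤ n`, it waits until (halting strings) + (strings rejected by `A`)
reaches `#{x | |x| ≤ n} + 2 ^ (L - 1) - s`, and then outputs more than every output of `U` seen.
Each string contributes `±1` to the difference between that count and `#{x | |x| ≤ n}` only if it
is an error point, so if `A` has fewer than `2 ^ (L - 1)` error points up to length `n` some offset
`s` hits the final count exactly. Both counts grow from below, so at that moment every halting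
string of length `≤ n` has halted: the output has `U`-complexity `> n` but a `V`-description of
length `L + a + 1 = n - 2 ^ a + a + 1`, contradicting `2 ^ a > a + c`. Hence the error rate is at
least `2 ^ (-(2 ^ a + 2))` at every level `n > 2 ^ a` whose first coordinate codes `A`.
-/

open Encodable
open Nat.Partrec (Code)
open Nat.Partrec.Code

section Strings

def stringsOfLength : ℕ → List (List Bool)
  | 0 => [[]]
  | k + 1 => (stringsOfLength k).flatMap fun l => [false :: l, true :: l]

def stringsUpTo (n : ℕ) : List (List Bool) :=
  (List.range (n + 1)).flatMap stringsOfLength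

theorem mem_stringsOfLength {k : ℕ} {l : List Bool} : l ∈ stringsOfLength k ↔ l.length = k := by
  induction k generalizing l with
  | zero => simp [stringsOfLength]
  | succ k ih =>
    rcases l with _ | ⟨b, l⟩
    · simp [stringsOfLength]
    · cases b <;> simp [stringsOfLength, ih]

theorem length_stringsOfLength (k : ℕ) : (stringsOfLength k).length = 2 ^ k := by
  induction k with
  | zero => rfl
  | succ k ih => simp [stringsOfLength, List.length_flatMap, ih, pow_succ]

theorem nodup_stringsOfLength (k : ℕ) : (stringsOfLength k).Nodup := by
  induction k with
  | zero => simp [stringsOfLength]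
  | succ k ih =>
    refine List.nodup_flatMap.2 ⟨fun l _ => by simp, ih.imp fun hne => ?_⟩
    simp [Function.onFun, Ne.symm hne]

theorem mem_stringsUpTo {n : ℕ} {l : List Bool} : l ∈ stringsUpTo n ↔ l.length ≤ n := by
  simp [stringsUpTo, mem_stringsOfLength]

theorem nodup_stringsUpTo (n : ℕ) : (stringsUpTo n).Nodup :=
  List.nodup_flatMap.2 ⟨fun k _ => nodup_stringsOfLength k, List.nodup_range.imp fun hne =>
    List.disjoint_left.2 fun _ h h' => hne ((mem_stringsOfLength.1 h).symm.trans
      (mem_stringsOfLength.1 h'))⟩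

theorem ncard_setOf_length_le_and (n : ℕ) (P : List Bool → Prop) [DecidablePred P] :
    {x : List Bool | x.length ≤ n ∧ P x}.ncard = (stringsUpTo n).countP (P ·) := by
  have h : {x : List Bool | x.length ≤ n ∧ P x} = ↑((stringsUpTo n).filter (P ·)).toFinset := by
    ext x; simp [mem_stringsUpTo]
  rw [h, Set.ncard_coe_finset, List.toFinset_card_of_nodup ((nodup_stringsUpTo n).filter _),
    List.countP_eq_length_filter]

open Primrec in
theorem primrec_stringsOfLength : Primrec stringsOfLength := by
  have hstep : Primrec fun l : List Bool => [false :: l, true :: l] :=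
    list_cons.comp (list_cons.comp (const false) .id)
      (list_cons.comp (list_cons.comp (const true) .id) (const []))
  refine (nat_rec₁ [[]] (list_flatMap snd (hstep.comp snd).to₂).to₂).of_eq fun k => ?_
  induction k with
  | zero => rfl
  | succ k ih => simp [stringsOfLength, ← ih]

open Primrec in
theorem primrec_stringsUpTo : Primrec stringsUpTo :=
  list_flatMap (list_range.comp succ) (primrec_stringsOfLength.comp snd).to₂

end Strings

section Stages

variable {α : Type*}

theorem List.filterMap_sublist_filterMap_of_forall {β : Type*} {f g : α → Option β}
    (h : ∀ x, f x = none ∨ f x = g x) (l : List α) : (l.filterMap f).Sublist (l.filterMap g) := by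
  induction l with
  | nil => simp
  | cons x l ih =>
    rcases h x with hx | hx
    · cases hg : g x <;> simp [hx, hg, ih, ih.cons]
    · cases hg : g x <;> simp [hx, hg, ih]

theorem evaln_eq_none_or_eq_toOption (t : ℕ) (c : Code) (n : ℕ) [Decidable (eval c n).Dom] :
    evaln t c n = none ∨ evaln t c n = (eval c n).toOption := by
  rcases h : evaln t c n with _ | v
  · exact .inl rfl
  · exact .inr (Part.toOption_eq_some_iff.2 (evaln_sound h)).symm

theorem eventually_evaln_eq_toOption (c : Code) (n : ℕ) [Decidable (eval c n).Dom] :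
    ∀ᶠ t in atTop, evaln t c n = (eval c n).toOption := by
  by_cases h : (eval c n).Dom
  · obtain ⟨k, hk⟩ := evaln_complete.1 (Part.get_mem h)
    filter_upwards [eventually_ge_atTop k] with t ht
    rw [Part.toOption_eq_some_iff.2 (Part.get_mem h)]
    exact evaln_mono ht hk
  · refine Eventually.of_forall fun t => ?_
    rw [Part.toOption_eq_none_iff.2 h, Option.eq_none_iff_forall_not_mem]
    exact fun v hv => h (Part.dom_iff_mem.2 ⟨v, evaln_sound hv⟩)

open scoped Classical in
noncomputable def outputsOn (f : α →. ℕ) (xs : List α) : List ℕ :=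
  xs.filterMap fun x => (f x).toOption

open scoped Classical in
theorem length_outputsOn (f : α →. ℕ) (xs : List α) :
    (outputsOn f xs).length = xs.countP fun x => (f x).Dom := by
  rw [outputsOn, List.length_filterMap_eq_countP]
  congr 1
  funext x
  by_cases h : (f x).Dom <;> simp [Part.toOption, h]

open scoped Classical in
theorem count_outputsOn (f : α →. ℕ) (xs : List α) (v : ℕ) :
    (outputsOn f xs).count v = xs.countP fun x => v ∈ f x := by
  rw [outputsOn, List.count_filterMap]
  congr 1
  funext x
  rw [Bool.eq_iff_iff, beq_iff_eq, decide_eq_true_iff, Part.toOption_eq_some_iff]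

theorem mem_outputsOn {f : α →. ℕ} {xs : List α} {v : ℕ} :
    v ∈ outputsOn f xs ↔ ∃ x ∈ xs, v ∈ f x := by
  simp [outputsOn, Part.toOption_eq_some_iff]

variable [Encodable α]

def stageOutputs (c : Code) (xs : List α) (t : ℕ) : List ℕ :=
  xs.filterMap fun x => evaln t c (encode x)

theorem stageOutputs_sublist_outputsOn {c : Code} {f : α →. ℕ}
    (hc : ∀ x, eval c (encode x) = f x) (xs : List α) (t : ℕ) :
    (stageOutputs c xs t).Sublist (outputsOn f xs) := by
  classical
  refine List.filterMap_sublist_filterMap_of_forall (fun x => ?_) xs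
  simpa only [hc] using evaln_eq_none_or_eq_toOption t c (encode x)

theorem eventually_stageOutputs_eq_outputsOn {c : Code} {f : α →. ℕ}
    (hc : ∀ x, eval c (encode x) = f x) (xs : List α) :
    ∀ᶠ t in atTop, stageOutputs c xs t = outputsOn f xs := by
  classical
  have h := (eventually_all_finite xs.finite_toSet).2
    fun x _ => eventually_evaln_eq_toOption c (encode x)
  filter_upwards [h] with t ht
  exact List.filterMap_congr fun x hx => by simpa only [hc] using ht x hx

theorem exists_code_eval_encode {α σ : Type*} [Primcodable α] [Primcodable σ] {f : α →. σ}
    (hf : Partrec f) : ∃ c : Code, ∀ x, eval c (encode x) = (f x).map encode := by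
  obtain ⟨c, hc⟩ := exists_code.1 hf
  exact ⟨c, fun x => by simp [hc]⟩

end Stages

section Search

variable {α : Type*} [Encodable α]

def boundSearch (c₁ c₂ : Code) (xs : List α) (target t : ℕ) : Option ℕ :=
  if (stageOutputs c₁ xs t).length + (stageOutputs c₂ xs t).count 0 = target then
    some ((stageOutputs c₁ xs t).sum + 1)
  else none

theorem exists_mem_rfindOpt_boundSearch {c₁ c₂ : Code} {f₁ f₂ : α →. ℕ}
    (hc₁ : ∀ x, eval c₁ (encode x) = f₁ x) (hc₂ : ∀ x, eval c₂ (encode x) = f₂ x)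
    {xs : List α} {target : ℕ}
    (htarget : target = (outputsOn f₁ xs).length + (outputsOn f₂ xs).count 0) :
    ∃ O ∈ Nat.rfindOpt (boundSearch c₁ c₂ xs target), ∀ v ∈ outputsOn f₁ xs, v < O := by
  have hdom : (Nat.rfindOpt (boundSearch c₁ c₂ xs target)).Dom := by
    obtain ⟨t, ht₁, ht₂⟩ := ((eventually_stageOutputs_eq_outputsOn hc₁ xs).and
      (eventually_stageOutputs_eq_outputsOn hc₂ xs)).exists
    exact Nat.rfindOpt_dom.2
      ⟨t, (outputsOn f₁ xs).sum + 1, by simp [boundSearch, ht₁, ht₂, htarget]⟩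
  obtain ⟨O, hO⟩ := Part.dom_iff_mem.1 hdom
  refine ⟨O, hO, fun v hv => ?_⟩
  obtain ⟨t, ht⟩ := Nat.rfindOpt_spec hO
  have hsub₁ := stageOutputs_sublist_outputsOn hc₁ xs t
  have hsub₂ := stageOutputs_sublist_outputsOn hc₂ xs t
  simp only [boundSearch, Option.mem_def, Option.ite_none_right_eq_some, Option.some.injEq] at ht
  obtain ⟨hcount, rfl⟩ := ht
  -- both stage counts are bounded by their limits, so hitting the sum makes the first exact
  have hexact : stageOutputs c₁ xs t = outputsOn f₁ xs :=
    hsub₁.eq_of_length (by have := hsub₁.length_le; have := hsub₂.count_le 0; omega)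
  rw [hexact]
  exact Nat.lt_succ_of_le (List.le_sum_of_mem hv)

end Search

section Counting

variable (U : List Bool →. ℕ) (A : List Bool →. Bool)

theorem dom_iff_false_notMem_of_not_errorPoint {x : List Bool} (hx : ¬ErrorPoint U A x) :
    (U x).Dom ↔ false ∉ A x := by
  rw [ErrorPoint, not_not] at hx
  rcases hx with ⟨hd, ht⟩ | ⟨hd, hf⟩
  · exact iff_of_true hd fun hf => Bool.false_ne_true (Part.mem_unique hf ht)
  · exact iff_of_false hd (not_not.2 hf)

open scoped Classical in
theorem abs_countP_dom_add_countP_false_sub_length_le (xs : List (List Bool)) :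
    |((xs.countP fun x => (U x).Dom) + (xs.countP fun x => false ∈ A x) : ℤ) - xs.length|
      ≤ xs.countP fun x => ErrorPoint U A x := by
  induction xs with
  | nil => simp
  | cons x xs ih =>
    rw [abs_le] at ih ⊢
    simp only [List.countP_cons, List.length_cons, decide_eq_true_eq]
    by_cases he : ErrorPoint U A x
    · by_cases hd : (U x).Dom <;> by_cases hf : false ∈ A x <;> simp [hd, hf, he] <;> omega
    · have hcorrect := dom_iff_false_notMem_of_not_errorPoint U A he
      by_cases hd : (U x).Dom
      · simp [hd, hcorrect.1 hd, he]; omega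
      · simp [hd, not_not.1 (mt hcorrect.2 hd), he]; omega

end Counting

section Computability

open Primrec

variable {α β : Type*} [Primcodable α] [Primcodable β]

theorem primrec_stageOutputs {c : β → Code} {xs : β → List α} {t : β → ℕ} (hc : Primrec c)
    (hxs : Primrec xs) (ht : Primrec t) : Primrec fun b => stageOutputs (c b) (xs b) (t b) :=
  listFilterMap hxs <| to₂ <| primrec_evaln.comp <|
    ((ht.comp fst).pair (hc.comp fst)).pair (Primrec.encode.comp snd)

theorem primrec_boundSearch {c₁ c₂ : β → Code} {xs : β → List α} {target t : β → ℕ}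
    (hc₁ : Primrec c₁) (hc₂ : Primrec c₂) (hxs : Primrec xs) (htarget : Primrec target)
    (ht : Primrec t) : Primrec fun b => boundSearch (c₁ b) (c₂ b) (xs b) (target b) (t b) := by
  have hout₁ := primrec_stageOutputs hc₁ hxs ht
  have hcount : Primrec fun b => (stageOutputs (c₂ b) (xs b) (t b)).count 0 :=
    (list_length.comp <| (listFilter (Primrec.eq.comp .id (const 0))).comp
      (primrec_stageOutputs hc₂ hxs ht)).of_eq fun b => (List.count_eq_length_filter ..).symm
  have hsum : Primrec fun l : List ℕ => l.sum :=
    list_foldr .id (const 0) (nat_add.comp (fst.comp snd) (snd.comp snd)).to₂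
  exact Primrec.ite (Primrec.eq.comp (nat_add.comp (list_length.comp hout₁) hcount) htarget)
    (option_some.comp (succ.comp (hsum.comp hout₁))) (const none)

end Computability

section Adversary

def adversaryStep (cU : Code) (p : List Bool) (t : ℕ) : Option ℕ :=
  let a := p.findIdx (fun b => b)
  let r := p.drop (a + 1)
  let n := r.length + 2 ^ a
  boundSearch cU (Denumerable.ofNat Code n.unpair.1) (stringsUpTo n)
    ((stringsUpTo n).length + 2 ^ (r.length - 1) - (stringsOfLength r.length).idxOf r) t

def adversary (cU : Code) : List Bool →. ℕ := fun p => Nat.rfindOpt (adversaryStep cU p)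

theorem adversaryStep_replicate_append (cU : Code) (a : ℕ) (r : List Bool) :
    adversaryStep cU (List.replicate a false ++ true :: r) =
      boundSearch cU (Denumerable.ofNat Code (r.length + 2 ^ a).unpair.1)
        (stringsUpTo (r.length + 2 ^ a))
        ((stringsUpTo (r.length + 2 ^ a)).length + 2 ^ (r.length - 1)
          - (stringsOfLength r.length).idxOf r) := by
  have ha : (List.replicate a false ++ true :: r).findIdx (fun b => b) = a := by
    induction a <;> simp_all [List.replicate_succ, List.findIdx_cons]
  funext t
  simp only [adversaryStep, ha]
  simp [List.drop_append, List.drop_replicate]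

open Primrec in
theorem partrec_adversary (cU : Code) : Partrec (adversary cU) := by
  have hpow : Primrec fun k : ℕ => 2 ^ k :=
    (Primrec₂.unpaired'.1 Nat.Primrec.pow).comp (const 2) .id
  have ha : Primrec fun x : List Bool × ℕ => x.1.findIdx (fun b => b) :=
    list_findIdx fst Primrec₂.right
  have hr : Primrec fun x : List Bool × ℕ => x.1.drop (x.1.findIdx (fun b => b) + 1) :=
    list_drop.comp (succ.comp ha) fst
  have hlen := list_length.comp hr
  have hn := nat_add.comp hlen (hpow.comp ha)
  have hxs := primrec_stringsUpTo.comp hn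
  have hstep : Primrec₂ (adversaryStep cU) := primrec_boundSearch (const cU)
    ((Primrec.ofNat Code).comp (fst.comp (Primrec.unpair.comp hn))) hxs
    (nat_sub.comp (nat_add.comp (list_length.comp hxs) (hpow.comp (nat_sub.comp hlen (const 1))))
      ((list_idxOf.comp hr (primrec_stringsOfLength.comp hlen)).of_eq fun _ => by
        congr; exact lawful_beq_subsingleton _ _)) snd
  exact Partrec.rfindOpt hstep.to_comp

theorem exists_mem_adversary_forall_lt {U : List Bool →. ℕ} {A : List Bool →. Bool}
    {cU cA : Code} (hcU : ∀ x, eval cU (encode x) = U x)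
    (hcA : ∀ x, eval cA (encode x) = (A x).map encode) {a L : ℕ} (hL : 1 ≤ L)
    (hcode : (L + 2 ^ a).unpair.1 = encode cA)
    (hE : {x : List Bool | x.length ≤ L + 2 ^ a ∧ ErrorPoint U A x}.ncard < 2 ^ (L - 1)) :
    ∃ p : List Bool, p.length = L + a + 1 ∧ ∃ O ∈ adversary cU p,
      ∀ q : List Bool, q.length ≤ L + 2 ^ a → ∀ v ∈ U q, v < O := by
  classical
  set xs := stringsUpTo (L + 2 ^ a)
  have hF : (outputsOn (fun x => (A x).map encode) xs).count 0 =
      xs.countP fun x => false ∈ A x := by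
    refine (count_outputsOn _ xs 0).trans (List.countP_congr fun x _ => ?_)
    simp [Part.mem_map_iff]
  have hbound := abs_countP_dom_add_countP_false_sub_length_le U A xs
  rw [← length_outputsOn, ← hF, ← ncard_setOf_length_le_and, abs_le] at hbound
  set B := (outputsOn U xs).length
  set F := (outputsOn (fun x => (A x).map encode) xs).count 0
  have hpow : 2 ^ L = 2 * 2 ^ (L - 1) := by rw [← pow_succ']; congr; omega
  set s := xs.length + 2 ^ (L - 1) - (B + F)
  have hs : s < (stringsOfLength L).length := by rw [length_stringsOfLength]; omega
  set r := (stringsOfLength L)[s]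
  have hr : r.length = L := mem_stringsOfLength.1 (List.getElem_mem hs)
  have htarget : xs.length + 2 ^ (L - 1) - (stringsOfLength L).idxOf r = B + F := by
    rw [(nodup_stringsOfLength L).idxOf_getElem s hs]; omega
  have hcA' : ∀ x, eval (Denumerable.ofNat Code (L + 2 ^ a).unpair.1) (encode x) =
      (A x).map encode := by
    rw [hcode, Denumerable.ofNat_encode]; exact hcA
  obtain ⟨O, hO, hgt⟩ := exists_mem_rfindOpt_boundSearch hcU hcA' rfl (xs := xs)
  refine ⟨List.replicate a false ++ true :: r, by simp [hr]; omega, O, ?_,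
    fun q hq v hv => hgt v (mem_outputsOn.2 ⟨q, mem_stringsUpTo.2 hq, hv⟩)⟩
  rwa [adversary, adversaryStep_replicate_append, hr, htarget]

end Adversary

theorem KU_le_length {W : List Bool →. ℕ} {m : ℕ} {p : List Bool} (h : m ∈ W p) :
    KU W m ≤ p.length :=
  sInf_le ⟨p, h, rfl⟩

theorem lt_KU {W : List Bool →. ℕ} {m n : ℕ} (h : ∀ p, m ∈ W p → n < p.length) :
    (n : ℕ∞) < KU W m := by
  refine (ENat.add_one_le_iff (ENat.natCast_ne_top n)).1 (le_sInf ?_)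
  rintro _ ⟨p, hm, rfl⟩
  exact_mod_cast h p hm

theorem lt_length_add_of_KU_le_add {U V : List Bool →. ℕ} {m n c : ℕ} {p : List Bool}
    (hc : KU U m ≤ KU V m + c) (hp : m ∈ V p) (hU : ∀ q, m ∈ U q → n < q.length) :
    n < p.length + c := by
  have h := (lt_KU hU).trans_le (hc.trans (add_le_add_left (KU_le_length hp) _))
  exact_mod_cast h

theorem ncard_errorPoint_lt_of_errRate_lt {U : List Bool →. ℕ} {A : List Bool →. Bool} {n k : ℕ}
    (hk : k ≤ n + 1) (h : errRate U A n < ((2 : ℝ) ^ k)⁻¹) :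
    {x : List Bool | x.length ≤ n ∧ ErrorPoint U A x}.ncard < 2 ^ (n + 1 - k) := by
  rw [errRate, div_lt_iff₀ (by positivity), mul_comm, ← pow_sub₀ _ two_ne_zero hk] at h
  exact_mod_cast h

/-- for an optimal machine `U` there is a single `ε > 0` such that every
partial computable `A` has error rate at least `ε` for infinitely many `n`. -/
theorem limsup_error_rate_uniform (U : List Bool →. ℕ) (hU : OptimalMachine U) :
    ∃ ε : ℝ, 0 < ε ∧ ∀ A : List Bool →. Bool, Partrec A →
      ∀ N : ℕ, ∃ n ≥ N, ε ≤ errRate U A n := by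
  obtain ⟨hUp, hopt⟩ := hU
  obtain ⟨cU, hcU⟩ := exists_code_eval_encode hUp
  replace hcU : ∀ x, eval cU (encode x) = U x :=
    fun x => (hcU x).trans (Part.map_id' (fun _ => rfl) _)
  obtain ⟨c, hc⟩ := hopt (adversary cU) (partrec_adversary cU)
  set a := c + 1
  refine ⟨((2 : ℝ) ^ (2 ^ a + 2))⁻¹, by positivity, fun A hA N => ?_⟩
  by_contra! hsmall
  obtain ⟨cA, hcA⟩ := exists_code_eval_encode hA
  set n := Nat.pair (encode cA) (N + 2 ^ a + 1)
  have hnN : N + 2 ^ a + 1 ≤ n := Nat.right_le_pair _ _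
  have h2a : 0 < 2 ^ a := by positivity
  obtain ⟨L, hLn⟩ : ∃ L, L + 2 ^ a = n := ⟨n - 2 ^ a, by omega⟩
  have hE := ncard_errorPoint_lt_of_errRate_lt (k := 2 ^ a + 2) (by omega) (hsmall n (by omega))
  rw [show n + 1 - (2 ^ a + 2) = L - 1 by omega, ← hLn] at hE
  obtain ⟨p, hp, O, hO, hgt⟩ := exists_mem_adversary_forall_lt hcU hcA (by omega)
    (by rw [hLn, Nat.unpair_pair]) hE
  rw [hLn] at hgt
  have hK := lt_length_add_of_KU_le_add (hc O) hO fun q hq =>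
    not_le.1 fun hqn => (hgt q hqn O hq).false
  have hc_lt : c < 2 ^ c := Nat.lt_two_pow_self
  have hpow : 2 ^ a = 2 * 2 ^ c := pow_succ' 2 c
  omega
end

section
/- Let U be a left-total optimal machine. For every rational ε > 0 there exists a partial computable function A : List Bool →. Bool that makes no wrong answers (whenever A(x) terminates, its output is true if U(x) is defined and false if U(x) is undefined) and satisfies liminf_{n→∞} ε_n(A) ≤ ε. -/
open Filter

/-!
For a left-total machine the domain at length `j` consists of the first `a_j` strings of that
length, so deciding it amounts to knowing `a_j`. Let `D_n = ∑_{j ≤ n} a_j < 2^(n+1)` and fix `b`;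
take `a` maximal with `a / b ≤ D_n / 2^(n+1)` infinitely often, so that eventually
`D_n / 2^(n+1) < (a + 1) / b`. For such `n`, once at least `a 2^(n+1) / b` strings of length
`≤ n` have halted, fewer than `2^(n+1) / b` are still missing, so a string of length
`j ∈ (n - k, n]` whose rank exceeds the current count at length `j` by `2^(n+1) / b` is surely
outside the domain. At each of the infinitely many `n` with `D_n ≥ a 2^(n+1) / b` this eventually
answers all but `2^(n+1) / b` of the non-halting strings at each of the last `k` lengths, while
the shorter strings form a fraction `2^(-k)`; so the error rate is at most `2^(-k) + k / b`
infinitely often.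
-/

namespace BinaryString

open Finset

/-- The string of length `j` spelling `i` in binary, most significant bit first (so only
`i % 2 ^ j` matters). -/
def ofRank (j i : ℕ) : List Bool := ((List.range j).map i.testBit).reverse

def rank (x : List Bool) : ℕ := x.foldl (fun r b => 2 * r + b.toNat) 0

@[simp] theorem length_ofRank (j i : ℕ) : (ofRank j i).length = j := by
  simp [ofRank]

theorem ofRank_succ (j i : ℕ) : ofRank (j + 1) i = i.testBit j :: ofRank j i := by
  simp [ofRank, List.range_succ]

theorem ofRank_congr {j i i' : ℕ} (h : ∀ t < j, i.testBit t = i'.testBit t) :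
    ofRank j i = ofRank j i' := by
  simp only [ofRank]
  congr 1
  exact List.map_congr_left fun t ht => h t (List.mem_range.1 ht)

theorem foldl_rank (x : List Bool) (r : ℕ) :
    x.foldl (fun r b => 2 * r + b.toNat) r = 2 ^ x.length * r + rank x := by
  induction x generalizing r with
  | nil => simp only [List.foldl_nil, List.length_nil, pow_zero, one_mul]; rfl
  | cons b l ih =>
    have hb : rank (b :: l) = l.foldl (fun r b => 2 * r + b.toNat) (2 * 0 + b.toNat) := rfl
    rw [List.foldl_cons, ih, hb, ih, List.length_cons, pow_succ]
    ring

theorem rank_cons (b : Bool) (l : List Bool) : rank (b :: l) = 2 ^ l.length * b.toNat + rank l := by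
  rw [rank, List.foldl_cons, foldl_rank]
  simp

theorem rank_lt_two_pow (x : List Bool) : rank x < 2 ^ x.length := by
  induction x with
  | nil => simp [rank]
  | cons b l ih =>
    rw [rank_cons, List.length_cons, pow_succ]
    have := Bool.toNat_le b
    nlinarith

theorem rank_ofRank (j i : ℕ) : rank (ofRank j i) = i % 2 ^ j := by
  induction j with
  | zero => simp [ofRank, rank, Nat.mod_one]
  | succ j ih =>
    rw [ofRank_succ, rank_cons, length_ofRank, ih, Nat.testBit_eq_decide_div_mod_eq, pow_succ,
      Nat.mod_mul, add_comm]
    rcases Nat.mod_two_eq_zero_or_one (i / 2 ^ j) with h | h <;> simp [h]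

theorem ofRank_rank (x : List Bool) : ofRank x.length (rank x) = x := by
  induction x with
  | nil => rfl
  | cons b l ih =>
    have hl := rank_lt_two_pow l
    rw [List.length_cons, ofRank_succ, rank_cons, Nat.testBit_two_pow_mul_add _ hl,
      if_neg (by omega), Nat.sub_self, ofRank_congr (i' := rank l), ih]
    · cases b <;> simp
    · intro t ht
      rw [Nat.testBit_two_pow_mul_add _ hl, if_pos ht]

theorem eq_of_rank_eq {x y : List Bool} (hlen : x.length = y.length) (h : rank x = rank y) :
    x = y := by
  rw [← ofRank_rank x, ← ofRank_rank y, hlen, h]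

theorem lex_of_rank_lt {x y : List Bool} (hlen : x.length = y.length) (h : rank x < rank y) :
    List.Lex (· < ·) x y := by
  induction x generalizing y with
  | nil => simp_all [List.length_eq_zero_iff.1 hlen.symm]
  | cons a l ih =>
    obtain _ | ⟨b, m⟩ := y
    · simp at hlen
    simp only [List.length_cons, Nat.add_right_cancel_iff] at hlen
    rw [rank_cons, rank_cons, hlen] at h
    have hl := rank_lt_two_pow l
    have hm := rank_lt_two_pow m
    rw [List.cons_lex_cons_iff]
    cases a <;> cases b
    · exact Or.inr ⟨rfl, ih hlen (by simpa using h)⟩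
    · exact Or.inl (by decide)
    · simp at h; omega
    · exact Or.inr ⟨rfl, ih hlen (by simp at h; omega)⟩

section Counting

variable {p q : List Bool → Prop} [DecidablePred p] [DecidablePred q]

variable (p) in
def lenCount (j : ℕ) : ℕ := #{i ∈ range (2 ^ j) | p (ofRank j i)}

variable (p) in
def cumCount (n : ℕ) : ℕ := ∑ j ∈ range (n + 1), lenCount p j

theorem lenCount_le_two_pow (j : ℕ) : lenCount p j ≤ 2 ^ j :=
  (card_filter_le _ _).trans (card_range _).le

theorem cumCount_lt_two_pow (n : ℕ) : cumCount p n < 2 ^ (n + 1) := by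
  have h := sum_le_sum fun j (_ : j ∈ range (n + 1)) => lenCount_le_two_pow (p := p) j
  rw [Nat.geomSum_eq le_rfl] at h
  have := Nat.one_le_two_pow (n := n + 1)
  simp only [Nat.add_one_sub_one, Nat.div_one] at h
  exact lt_of_le_of_lt h (by omega)

theorem lenCount_mono (h : ∀ x, p x → q x) (j : ℕ) : lenCount p j ≤ lenCount q j :=
  card_le_card fun _ hi => by
    simp only [mem_filter] at hi ⊢
    exact ⟨hi.1, h _ hi.2⟩

theorem lenCount_congr {j : ℕ} (h : ∀ x, x.length = j → (p x ↔ q x)) :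
    lenCount p j = lenCount q j := by
  unfold lenCount
  congr 1
  exact filter_congr fun i _ => h _ (length_ofRank j i)

theorem cumCount_congr {n : ℕ} (h : ∀ x, x.length ≤ n → (p x ↔ q x)) :
    cumCount p n = cumCount q n :=
  sum_congr rfl fun j hj => lenCount_congr fun x hx => h x (by simp at hj; omega)

theorem lenCount_add_cumCount_le (h : ∀ x, p x → q x) {j n : ℕ} (hj : j ≤ n) :
    lenCount q j + cumCount p n ≤ lenCount p j + cumCount q n := by
  have hjn : j ∈ range (n + 1) := mem_range.2 (by omega)
  have hrest := sum_le_sum fun i (_ : i ∈ (range (n + 1)).erase j) => lenCount_mono h i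
  rw [cumCount, cumCount, ← add_sum_erase _ _ hjn, ← add_sum_erase _ _ hjn]
  omega

theorem ncard_le_sum_card {S : Set (List Bool)} (n : ℕ) (I : ℕ → Finset ℕ)
    (h : ∀ x ∈ S, x.length ≤ n ∧ rank x ∈ I x.length) :
    S.ncard ≤ ∑ j ∈ range (n + 1), #(I j) := by
  rw [← card_sigma, ← Set.ncard_coe_finset]
  refine Set.ncard_le_ncard_of_injOn (fun x => ⟨x.length, rank x⟩) (fun x hx => ?_) ?_
    (Set.toFinite _)
  · simpa [Nat.lt_succ_iff] using h x hx
  · intro x _ y _ hxy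
    simp only [Sigma.mk.injEq] at hxy
    exact eq_of_rank_eq hxy.1 (eq_of_heq hxy.2)

end Counting

end BinaryString

theorem Primrec.nat_pow : Primrec₂ ((· ^ ·) : ℕ → ℕ → ℕ) :=
  Primrec₂.unpaired'.1 Nat.Primrec.pow

theorem Primrec.sum_range {α : Type*} [Primcodable α] {f : α → ℕ → ℕ} (hf : Primrec₂ f) :
    Primrec₂ fun a n => ∑ i ∈ Finset.range n, f a i := by
  refine (Primrec.nat_rec (Primrec.const 0)
    (Primrec.nat_add.comp (Primrec.snd.comp Primrec.snd)
      (hf.comp Primrec.fst (Primrec.fst.comp Primrec.snd))).to₂).of_eq fun a n => ?_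
  induction n with
  | zero => simp
  | succ n ih => rw [Finset.sum_range_succ, ← ih]

theorem Primrec.nat_testBit : Primrec₂ Nat.testBit := by
  refine (PrimrecPred.decide (Primrec.eq.comp (Primrec.nat_mod.comp
    (Primrec.nat_div.comp Primrec.fst (Primrec.nat_pow.comp (Primrec.const 2) Primrec.snd))
    (Primrec.const 2)) (Primrec.const 1))).to₂.of_eq fun n i => ?_
  rw [Nat.testBit_eq_decide_div_mod_eq]

namespace BinaryString

open Primrec

theorem primrec_ofRank : Primrec₂ ofRank :=
  list_reverse.comp (list_map (list_range.comp fst) (nat_testBit.comp (snd.comp fst) snd))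

theorem primrec_rank : Primrec rank :=
  list_foldl Primrec.id (const 0)
    (nat_add.comp (nat_mul.comp (const 2) (fst.comp snd))
      ((Primrec.dom_bool Bool.toNat).comp (snd.comp snd))).to₂

theorem primrec_lenCount {f : ℕ → List Bool → Bool} (hf : Primrec₂ f) :
    Primrec₂ fun s j => lenCount (f s · = true) j := by
  have hterm : Primrec₂ fun (p : ℕ × ℕ) i => if f p.1 (ofRank p.2 i) = true then 1 else 0 :=
    Primrec.ite (Primrec.eq.comp (hf.comp (fst.comp fst) (primrec_ofRank.comp (snd.comp fst) snd))
      (const true)) (const 1) (const 0)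
  refine ((sum_range hterm).comp Primrec.id (nat_pow.comp (const 2) snd)).to₂.of_eq fun s j => ?_
  rw [lenCount, Finset.card_filter]
  rfl

theorem primrec_cumCount {f : ℕ → List Bool → Bool} (hf : Primrec₂ f) :
    Primrec₂ fun s n => cumCount (f s · = true) n :=
  ((sum_range (primrec_lenCount hf)).comp fst (succ.comp snd)).to₂

end BinaryString

section Computability

variable {α σ : Type*} [Primcodable α] [Primcodable σ]

theorem Partrec.exists_decider_of_refutation {U : α →. σ} (hU : Partrec U)
    {r : α → ℕ → Bool} (hr : Computable₂ r) (hsound : ∀ x m, r x m = true → ¬(U x).Dom) :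
    ∃ A : α →. Bool, Partrec A ∧
      ∀ x, (true ∈ A x ↔ (U x).Dom) ∧ (false ∈ A x ↔ ∃ m, r x m = true) := by
  let refuted (x : α) : Part Bool :=
    Nat.rfindOpt fun m => bif r x m then some false else Option.none
  have spec {x : α} {v : Bool} (hv : v ∈ refuted x) : v = false ∧ ∃ m, r x m = true := by
    obtain ⟨m, hm⟩ := Nat.rfindOpt_spec hv
    cases hrm : r x m
    · simp [hrm] at hm
    · simp only [hrm, cond_true, Option.mem_def, Option.some.injEq] at hm
      exact ⟨hm.symm, m, hrm⟩
  have mem_refuted {x : α} {v : Bool} : v ∈ refuted x ↔ v = false ∧ ∃ m, r x m = true := by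
    refine ⟨spec, fun ⟨hv, m, hm⟩ => ?_⟩
    have hdom : (refuted x).Dom := Nat.rfindOpt_dom.2 ⟨m, false, by simp [hm]⟩
    rw [hv, ← (spec (Part.get_mem hdom)).1]
    exact Part.get_mem hdom
  have hrefuted : Partrec refuted :=
    Partrec.rfindOpt (Computable.cond hr (Computable.const _) (Computable.const _))
  obtain ⟨A, hA, hmem⟩ := Partrec.merge (hU.map (Computable.const true).to₂) hrefuted
    fun x _ hb _ hb' => by
      obtain ⟨y, hy, -⟩ := (Part.mem_map_iff _).1 hb
      obtain ⟨-, m, hm⟩ := mem_refuted.1 hb'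
      exact absurd (Part.dom_iff_mem.2 ⟨y, hy⟩) (hsound x m hm)
  refine ⟨A, hA, fun x => ⟨?_, ?_⟩⟩
  · simp [hmem, mem_refuted, Part.dom_iff_mem]
  · simp [hmem, mem_refuted]

theorem Partrec.exists_primrec_stages {U : α →. σ} (hU : Partrec U) :
    ∃ halt : ℕ → α → Bool, Primrec₂ halt ∧
      (∀ x s s', s ≤ s' → halt s x = true → halt s' x = true) ∧
      ∀ x, (U x).Dom ↔ ∃ s, halt s x = true := by
  obtain ⟨c, hc⟩ := Nat.Partrec.Code.exists_code.1 hU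
  have hdom (x : α) : (U x).Dom ↔ (c.eval (Encodable.encode x)).Dom := by
    simp [hc, Encodable.encodek]
  refine ⟨fun s x => (c.evaln s (Encodable.encode x)).isSome,
    Primrec.option_isSome.comp (Nat.Partrec.Code.primrec_evaln.comp
      ((Primrec.fst.pair (Primrec.const c)).pair (Primrec.encode.comp Primrec.snd))),
    fun x s s' hs h => ?_, fun x => ?_⟩
  · obtain ⟨y, hy⟩ := Option.isSome_iff_exists.1 h
    exact Option.isSome_iff_exists.2 ⟨y, Nat.Partrec.Code.evaln_mono hs hy⟩
  · rw [hdom, Part.dom_iff_mem]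
    simp only [Nat.Partrec.Code.evaln_complete, Option.isSome_iff_exists, Option.mem_def]
    exact ⟨fun ⟨y, s, hs⟩ => ⟨s, y, hs⟩, fun ⟨s, y, hs⟩ => ⟨y, s, hs⟩⟩

end Computability

open Filter in
theorem exists_stage_of_finite {α : Type*} {halt : ℕ → α → Bool}
    (hmono : ∀ x s s', s ≤ s' → halt s x = true → halt s' x = true) {S : Set α} (hS : S.Finite)
    (h : ∀ x ∈ S, ∃ s, halt s x = true) : ∃ s, ∀ x ∈ S, halt s x = true :=
  ((eventually_all_finite hS).2 fun x hx =>
    let ⟨s, hs⟩ := h x hx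
    eventually_atTop.2 ⟨s, fun s' hs' => hmono x s s' hs' hs⟩).exists

open Filter in
/-- `a / b` is the largest multiple of `1 / b` that `u n / w n` reaches infinitely often. -/
theorem Nat.exists_frequently_le_eventually_lt {u w : ℕ → ℕ} (huw : ∀ n, u n < w n) (b : ℕ) :
    ∃ a, (∃ᶠ n in atTop, a * w n ≤ b * u n) ∧ ∀ᶠ n in atTop, b * u n < (a + 1) * w n := by
  classical
  have hex : ∃ m, ¬∃ᶠ n in atTop, m * w n ≤ b * u n := by
    refine ⟨b + 1, not_frequently.2 (Eventually.of_forall fun n hn => ?_)⟩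
    have := huw n
    nlinarith
  have hpos : Nat.find hex ≠ 0 := by
    intro h0
    have := Nat.find_spec hex
    rw [h0] at this
    exact this (Eventually.of_forall fun n => by simp).frequently
  refine ⟨Nat.find hex - 1, not_not.1 (Nat.find_min hex (by omega)), ?_⟩
  have := Nat.find_spec hex
  rw [← Nat.succ_pred_eq_of_ne_zero hpos, not_frequently] at this
  exact this.mono fun n hn => by simpa using hn

theorem exists_half_pow_add_div_lt {ε : ℝ} (hε : 0 < ε) :
    ∃ k b : ℕ, 0 < b ∧ (1 / 2 : ℝ) ^ k + k / b < ε := by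
  obtain ⟨k, hk⟩ := exists_pow_lt_of_lt_one (half_pos hε) (by norm_num : (1 / 2 : ℝ) < 1)
  obtain ⟨b, hb⟩ := exists_nat_gt (2 * k / ε)
  have hb0 : (0 : ℝ) < b := (by positivity : (0 : ℝ) ≤ 2 * k / ε).trans_lt hb
  refine ⟨k, b, by exact_mod_cast hb0, ?_⟩
  rw [div_lt_iff₀ hε] at hb
  have : (k : ℝ) / b < ε / 2 := by
    rw [div_lt_iff₀ hb0]
    linarith
  linarith

namespace LeftTotal

open BinaryString Finset

variable {U : List Bool →. ℕ}

theorem dom_of_rank_le (hLT : LeftTotal U) {x y : List Bool} (hlen : x.length = y.length)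
    (hr : rank x ≤ rank y) (hy : (U y).Dom) : (U x).Dom := by
  rcases hr.lt_or_eq with h | h
  · exact hLT x y hlen (lex_of_rank_lt hlen h) hy
  · rwa [eq_of_rank_eq hlen h]

theorem dom_iff_rank_lt [DecidablePred fun y => (U y).Dom] (hLT : LeftTotal U) (x : List Bool) :
    (U x).Dom ↔ rank x < lenCount (fun y => (U y).Dom) x.length := by
  have hrank {i : ℕ} (hi : i < 2 ^ x.length) : rank (ofRank x.length i) = i := by
    rw [rank_ofRank, Nat.mod_eq_of_lt hi]
  have hx := rank_lt_two_pow x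
  constructor
  · intro hdom
    have : range (rank x + 1) ⊆ {i ∈ range (2 ^ x.length) | (U (ofRank x.length i)).Dom} := by
      intro i hi
      have hi' : i < 2 ^ x.length := by rw [mem_range] at hi; omega
      rw [mem_filter, mem_range]
      exact ⟨hi', hLT.dom_of_rank_le (by simp) (by rw [hrank hi']; simpa [Nat.lt_succ_iff] using hi)
        hdom⟩
    simpa [lenCount] using card_le_card this
  · intro hlt
    by_contra hdom
    have : {i ∈ range (2 ^ x.length) | (U (ofRank x.length i)).Dom} ⊆ range (rank x) := by
      intro i hi
      rw [mem_filter, mem_range] at hi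
      rw [mem_range]
      by_contra hge
      exact hdom (hLT.dom_of_rank_le (by simp) (by rw [hrank hi.1]; omega) hi.2)
    have := card_le_card this
    rw [card_range] at this
    exact absurd hlt (not_lt.2 this)

/-- At stage `s` at least `a 2^(n+1) / b` strings of length `≤ n` have halted; for `n ≥ N` this
leaves fewer than `2^(n+1) / b` of them still to halt, so a string whose rank exceeds the current
halting count at its length by that much is outside the domain of a left-total machine. -/
def Refutes (halt : ℕ → List Bool → Bool) (a b k N : ℕ) (x : List Bool) (s n : ℕ) : Prop :=
  x.length ≤ n ∧ n < x.length + k ∧ N ≤ n ∧ a * 2 ^ (n + 1) ≤ b * cumCount (halt s · = true) n ∧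
    lenCount (halt s · = true) x.length + 2 ^ (n + 1) / b ≤ rank x

instance (halt : ℕ → List Bool → Bool) (a b k N : ℕ) (x : List Bool) (s n : ℕ) :
    Decidable (Refutes halt a b k N x s n) := by
  unfold Refutes
  infer_instance

open Primrec in
theorem primrecPred_refutes {halt : ℕ → List Bool → Bool} (hhalt : Primrec₂ halt) (a b k N : ℕ) :
    PrimrecPred fun p : List Bool × ℕ × ℕ => Refutes halt a b k N p.1 p.2.1 p.2.2 := by
  have hlen : Primrec fun p : List Bool × ℕ × ℕ => p.1.length := list_length.comp fst
  have hs : Primrec fun p : List Bool × ℕ × ℕ => p.2.1 := fst.comp snd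
  have hn : Primrec fun p : List Bool × ℕ × ℕ => p.2.2 := snd.comp snd
  have hpow : Primrec fun p : List Bool × ℕ × ℕ => 2 ^ (p.2.2 + 1) :=
    nat_pow.comp (const 2) (succ.comp hn)
  exact (nat_le.comp hlen hn).and <| (nat_lt.comp hn (nat_add.comp hlen (const k))).and <|
    (nat_le.comp (const N) hn).and <|
    (nat_le.comp (nat_mul.comp (const a) hpow)
      (nat_mul.comp (const b) ((primrec_cumCount hhalt).comp hs hn))).and <|
    nat_le.comp (nat_add.comp ((primrec_lenCount hhalt).comp hs hlen) (nat_div.comp hpow (const b)))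
      (primrec_rank.comp fst)

section Refutation

variable {halt : ℕ → List Bool → Bool} {a b k N : ℕ} [DecidablePred fun y => (U y).Dom]

theorem not_dom_of_refutes (hLT : LeftTotal U) (hsound : ∀ s x, halt s x = true → (U x).Dom)
    (hb : 0 < b) (hN : ∀ n ≥ N, b * cumCount (fun y => (U y).Dom) n < (a + 1) * 2 ^ (n + 1))
    {x : List Bool} {s n : ℕ} (h : Refutes halt a b k N x s n) : ¬(U x).Dom := by
  obtain ⟨hxn, -, hNn, hsat, hrank⟩ := h
  have hgap := lenCount_add_cumCount_le (hsound s) hxn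
  have hmissing : cumCount (fun y => (U y).Dom) n - cumCount (halt s · = true) n ≤
      2 ^ (n + 1) / b := by
    have := hN n hNn
    rw [add_one_mul] at this
    rw [Nat.le_div_iff_mul_le hb, Nat.sub_mul, mul_comm _ b, mul_comm _ b]
    generalize 2 ^ (n + 1) = P at *
    omega
  rw [hLT.dom_iff_rank_lt]
  omega

theorem ncard_unrefuted_le (hLT : LeftTotal U) (hsound : ∀ s x, halt s x = true → (U x).Dom)
    {n s : ℕ} (hstage : ∀ x : List Bool, x.length ≤ n → (U x).Dom → halt s x = true)
    (hsat : a * 2 ^ (n + 1) ≤ b * cumCount (fun y => (U y).Dom) n) (hNn : N ≤ n) :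
    {x | x.length ≤ n ∧ ¬(U x).Dom ∧ ∀ s n, ¬Refutes halt a b k N x s n}.ncard ≤
      2 ^ (n + 1 - k) + k * (2 ^ (n + 1) / b) := by
  have hlen {j : ℕ} (hj : j ≤ n) : lenCount (halt s · = true) j = lenCount (fun y => (U y).Dom) j :=
    lenCount_congr fun x hx => ⟨hsound s x, hstage x (hx ▸ hj)⟩
  have hcum : cumCount (halt s · = true) n = cumCount (fun y => (U y).Dom) n :=
    cumCount_congr fun x hx => ⟨hsound s x, hstage x hx⟩
  let window (j : ℕ) : Finset ℕ :=
    Ico (lenCount (fun y => (U y).Dom) j) (lenCount (fun y => (U y).Dom) j + 2 ^ (n + 1) / b)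
  let I (j : ℕ) : Finset ℕ := if j < n + 1 - k then range (2 ^ j) else window j
  refine (ncard_le_sum_card n I fun x hx => ?_).trans ?_
  · obtain ⟨hxn, hdom, hunref⟩ := hx
    refine ⟨hxn, ?_⟩
    have hge := not_lt.1 (mt (hLT.dom_iff_rank_lt x).2 hdom)
    simp only [I]
    split_ifs with hshort
    · exact mem_range.2 (rank_lt_two_pow x)
    · refine mem_Ico.2 ⟨hge, not_le.1 fun hfar => hunref s n ?_⟩
      exact ⟨hxn, by omega, hNn, hcum ▸ hsat, (hlen hxn).symm ▸ hfar⟩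
  · rw [← sum_range_add_sum_Ico _ (Nat.sub_le (n + 1) k)]
    gcongr
    · calc ∑ j ∈ range (n + 1 - k), #(I j) = ∑ j ∈ range (n + 1 - k), 2 ^ j :=
            sum_congr rfl fun j hj => by simp [I, mem_range.1 hj]
        _ ≤ 2 ^ (n + 1 - k) := by rw [Nat.geomSum_eq le_rfl]; simp
    · calc ∑ j ∈ Ico (n + 1 - k) (n + 1), #(I j) = ∑ j ∈ Ico (n + 1 - k) (n + 1), 2 ^ (n + 1) / b :=
            sum_congr rfl fun j hj => by simp [I, window, not_lt.2 (mem_Ico.1 hj).1]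
        _ ≤ k * (2 ^ (n + 1) / b) := by
            rw [sum_const, smul_eq_mul, Nat.card_Ico]
            exact Nat.mul_le_mul_right _ (by omega)

theorem exists_decider (hU : Partrec U) (hLT : LeftTotal U) (hhalt : Primrec₂ halt)
    (hsound : ∀ s x, halt s x = true → (U x).Dom) (hb : 0 < b)
    (hN : ∀ n ≥ N, b * cumCount (fun y => (U y).Dom) n < (a + 1) * 2 ^ (n + 1)) :
    ∃ A : List Bool →. Bool, Partrec A ∧
      ∀ x, (true ∈ A x ↔ (U x).Dom) ∧ (false ∈ A x ↔ ∃ s n, Refutes halt a b k N x s n) := by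
  obtain ⟨A, hA, hspec⟩ := hU.exists_decider_of_refutation
    (r := fun x m => decide (Refutes halt a b k N x m.unpair.1 m.unpair.2))
    ((primrecPred_refutes hhalt a b k N).decide.comp
      (Primrec.fst.pair (Primrec.unpair.comp Primrec.snd))).to_comp.to₂
    fun x m h => not_dom_of_refutes hLT hsound hb hN (of_decide_eq_true h)
  refine ⟨A, hA, fun x => ⟨(hspec x).1, (hspec x).2.trans ⟨?_, ?_⟩⟩⟩
  · exact fun ⟨m, h⟩ => ⟨_, _, of_decide_eq_true h⟩
  · exact fun ⟨s, n, h⟩ => ⟨Nat.pair s n, by simpa using h⟩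

theorem errRate_le {A : List Bool →. Bool}
    (hA : ∀ x, (true ∈ A x ↔ (U x).Dom) ∧ (false ∈ A x ↔ ∃ s n, Refutes halt a b k N x s n))
    (hLT : LeftTotal U) (hsound : ∀ s x, halt s x = true → (U x).Dom)
    {n s : ℕ} (hstage : ∀ x : List Bool, x.length ≤ n → (U x).Dom → halt s x = true)
    (hsat : a * 2 ^ (n + 1) ≤ b * cumCount (fun y => (U y).Dom) n) (hNn : N ≤ n) (hkn : k ≤ n + 1) :
    errRate U A n ≤ (1 / 2) ^ k + k / b := by
  have herr : {x | x.length ≤ n ∧ ErrorPoint U A x} =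
      {x | x.length ≤ n ∧ ¬(U x).Dom ∧ ∀ s n, ¬Refutes halt a b k N x s n} := by
    ext x
    by_cases hx : (U x).Dom <;> simp [ErrorPoint, hA, hx]
  have hcount : ({x | x.length ≤ n ∧ ErrorPoint U A x}.ncard : ℝ) ≤
      (2 ^ (n + 1 - k) + k * (2 ^ (n + 1) / b : ℕ) : ℕ) := by
    rw [herr]
    exact_mod_cast ncard_unrefuted_le hLT hsound hstage hsat hNn
  have hshort : (2 : ℝ) ^ (n + 1 - k) = (1 / 2) ^ k * 2 ^ (n + 1) := by
    rw [pow_sub₀ _ two_ne_zero hkn, one_div_pow, one_div, mul_comm]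
  rw [errRate, div_le_iff₀ (by positivity)]
  refine hcount.trans ?_
  push_cast
  rw [hshort, add_mul]
  gcongr (1 / 2) ^ k * 2 ^ (n + 1) + ?_
  calc (k : ℝ) * ((2 ^ (n + 1) / b : ℕ) : ℝ) ≤ k * (2 ^ (n + 1) / b) := by
        gcongr
        exact_mod_cast Nat.cast_div_le
    _ = k / b * 2 ^ (n + 1) := by ring

theorem frequently_errRate_le {A : List Bool →. Bool}
    (hA : ∀ x, (true ∈ A x ↔ (U x).Dom) ∧ (false ∈ A x ↔ ∃ s n, Refutes halt a b k N x s n))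
    (hLT : LeftTotal U) (hmono : ∀ x s s', s ≤ s' → halt s x = true → halt s' x = true)
    (hdom : ∀ x, (U x).Dom ↔ ∃ s, halt s x = true)
    (hsat : ∃ᶠ n in Filter.atTop, a * 2 ^ (n + 1) ≤ b * cumCount (fun y => (U y).Dom) n) :
    ∃ᶠ n in Filter.atTop, errRate U A n ≤ (1 / 2) ^ k + k / b := by
  refine (hsat.and_eventually (Filter.eventually_ge_atTop (N + k))).mono fun n ⟨hsat, hn⟩ => ?_
  obtain ⟨s, hs⟩ := exists_stage_of_finite hmono (S := {x | x.length ≤ n ∧ (U x).Dom})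
    ((List.finite_length_le Bool n).subset fun _ hx => hx.1) fun x hx => (hdom x).1 hx.2
  exact errRate_le hA hLT (fun s x h => (hdom x).2 ⟨s, h⟩) (fun x hx hd => hs x ⟨hx, hd⟩) hsat
    (by omega) (by omega)

end Refutation

end LeftTotal

open BinaryString Filter in
/-- for a left-total optimal machine, there are algorithms making no wrong
answers whose liminf error rate is arbitrarily small. -/
theorem leftTotal_exists_no_error_small_liminf (U : List Bool →. ℕ)
    (hU : OptimalMachine U) (hLT : LeftTotal U) (ε : ℚ) (hε : 0 < ε) :
    ∃ A : List Bool →. Bool, Partrec A ∧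
      (∀ x, (true ∈ A x → (U x).Dom) ∧ (false ∈ A x → ¬(U x).Dom)) ∧
      Filter.liminf (fun n => errRate U A n) Filter.atTop ≤ (ε : ℝ) := by
  classical
  obtain ⟨halt, hhalt, hmono, hdom⟩ := hU.1.exists_primrec_stages
  have hsound : ∀ s x, halt s x = true → (U x).Dom := fun s x h => (hdom x).2 ⟨s, h⟩
  obtain ⟨k, b, hb, hkb⟩ := exists_half_pow_add_div_lt (by exact_mod_cast hε : (0 : ℝ) < ε)
  obtain ⟨a, hsat, hN⟩ := Nat.exists_frequently_le_eventually_lt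
    (cumCount_lt_two_pow (p := fun y => (U y).Dom)) b
  obtain ⟨N, hN⟩ := eventually_atTop.1 hN
  obtain ⟨A, hA, hAspec⟩ := LeftTotal.exists_decider (k := k) hU.1 hLT hhalt hsound hb hN
  refine ⟨A, hA, fun x => ⟨(hAspec x).1.1, fun h => ?_⟩, ?_⟩
  · obtain ⟨s, n, h⟩ := (hAspec x).2.1 h
    exact LeftTotal.not_dom_of_refutes hLT hsound hb hN h
  refine liminf_le_of_frequently_le ?_
    (isBoundedUnder_of ⟨0, fun n => by unfold errRate; positivity⟩)
  exact (LeftTotal.frequently_errRate_le hAspec hLT hmono hdom hsat).mono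
    fun n hn => hn.trans hkb.le
end

section
/- Let U be a machine such that for every machine V there exists a total computable length-bounded function h with the property that U(h(x)) = V(x) whenever V(x) is defined (U(h(x)) may be defined arbitrarily when V(x) is undefined). Then U is effectively optimal. -/
open Filter

/-!
Given `V`, let `M` run in parallel, on `z = 1^e 0 x`, the machine `V` on `x` and `U` on the
output of the `e`-th computable function at `z`, answering `V x` or that output of `U` plus one,
whichever halts first. A semi-translator `H` for `M` has some index `e`, and on `z = 1^e 0 x`
the second branch answers `U (H z) + 1`. Every answer of `M z` is an answer of `U (H z)`, so the
second branch never wins; hence `U (H z) = V x` when `V x` halts, and `U (H z)` diverges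
otherwise, since its convergence would make `M z` converge. So `x ↦ H (1^e 0 x)` is an exact
translator, with length overhead that of `H` plus `e + 1`.
-/

open Nat.Partrec (Code)
open Encodable

theorem Part.eq_of_forall_mem_of_merge_succ {m p q : Part ℕ}
    (hmem : ∀ a ∈ m, a ∈ p ∨ a ∈ q.map Nat.succ) (hdom : m.Dom ↔ p.Dom ∨ q.Dom)
    (hq : ∀ a ∈ m, a ∈ q) : q = p := by
  by_cases hqd : q.Dom
  · have ha := Part.get_mem (hdom.2 (Or.inr hqd))
    rcases hmem _ ha with hp | hsucc
    · exact (Part.eq_some_iff.2 (hq _ ha)).trans (Part.eq_some_iff.2 hp).symm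
    · obtain ⟨u, hu, hsucc⟩ := (Part.mem_map_iff _).1 hsucc
      exact absurd (hsucc.trans (Part.mem_unique (hq _ ha) hu)) (Nat.succ_ne_self u)
  · have hpd : ¬p.Dom := fun hpd =>
      hqd (Part.dom_iff_mem.2 ⟨_, hq _ (Part.get_mem (hdom.2 (Or.inl hpd)))⟩)
    rw [Part.eq_none_iff'.2 hqd, Part.eq_none_iff'.2 hpd]

section EvalIndex

variable {α β : Type*} [Primcodable α] [Primcodable β]

def evalIndex (e : ℕ) (a : α) : Part β :=
  ((Denumerable.ofNat Code e).eval (encode a)).bind fun n => (decode n : Option β)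

theorem partrec₂_evalIndex : Partrec₂ (evalIndex : ℕ → α →. β) :=
  Partrec.to₂ <| (Code.eval_part.comp ((Computable.ofNat Code).comp Computable.fst)
      (Computable.encode.comp Computable.snd)).bind
    (Computable.decode.comp Computable.snd).ofOption.to₂

theorem Partrec.exists_evalIndex_eq {f : α →. β} (hf : Partrec f) :
    ∃ e, evalIndex e = f := by
  obtain ⟨c, hc⟩ := Code.exists_code.1 hf
  refine ⟨encode c, funext fun a => ?_⟩
  simp [evalIndex, hc, encodek]

end EvalIndex

def unaryPad (e : ℕ) (x : List Bool) : List Bool := List.replicate e true ++ false :: x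

def padIndex (z : List Bool) : ℕ := (z.takeWhile id).length

def padBody (z : List Bool) : List Bool := (z.dropWhile id).tail

theorem padIndex_unaryPad (e : ℕ) (x : List Bool) : padIndex (unaryPad e x) = e := by
  induction e <;> simp_all [padIndex, unaryPad, List.replicate_succ]

theorem padBody_unaryPad (e : ℕ) (x : List Bool) : padBody (unaryPad e x) = x := by
  induction e <;> simp_all [padBody, unaryPad, List.replicate_succ]

theorem primrec_padIndex : Primrec padIndex :=
  Primrec.list_length.comp (Primrec.list_takeWhile Primrec.id)

theorem primrec_padBody : Primrec padBody :=
  Primrec.list_tail.comp (Primrec.list_dropWhile Primrec.id)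

theorem primrec_unaryPad (e : ℕ) : Primrec (unaryPad e) :=
  Primrec.list_append.comp (Primrec.const _)
    (Primrec.list_cons.comp (Primrec.const false) Primrec.id)

theorem LengthBounded.comp {g f : List Bool → List Bool} (hg : LengthBounded g)
    (hf : LengthBounded f) : LengthBounded (g ∘ f) := by
  obtain ⟨c, hc⟩ := hg
  obtain ⟨d, hd⟩ := hf
  exact ⟨d + c, fun x => (hc (f x)).trans (by have := hd x; omega)⟩

theorem lengthBounded_unaryPad (e : ℕ) : LengthBounded (unaryPad e) :=
  ⟨e + 1, fun x => by simp [unaryPad]; omega⟩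

def diagMachine (U : List Bool →. ℕ) (z : List Bool) : Part ℕ :=
  (evalIndex (padIndex z) z : Part (List Bool)).bind U

theorem partrec_diagMachine {U : List Bool →. ℕ} (hU : Partrec U) : Partrec (diagMachine U) :=
  (partrec₂_evalIndex.comp primrec_padIndex.to_comp Computable.id).bind (hU.comp Computable.snd)

theorem diagMachine_unaryPad (U : List Bool →. ℕ) {H : List Bool → List Bool} {e : ℕ}
    (he : evalIndex e = fun z => Part.some (H z)) (x : List Bool) :
    diagMachine U (unaryPad e x) = U (H (unaryPad e x)) := by
  rw [diagMachine, padIndex_unaryPad, he]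
  exact Part.bind_some _ _

/-- a machine admitting length-bounded total computable "semi-translators"
from every machine is effectively optimal. -/
theorem semiTranslator_implies_effOptimal (U : List Bool →. ℕ) (hU : Partrec U)
    (hsemi : ∀ V : List Bool →. ℕ, Partrec V → ∃ h : List Bool → List Bool,
      Computable h ∧ LengthBounded h ∧ ∀ x y, y ∈ V x → y ∈ U (h x)) :
    EffOptimal U := by
  refine ⟨hU, fun V hV => ?_⟩
  obtain ⟨M, hM, hMspec⟩ := Partrec.merge' (hV.comp primrec_padBody.to_comp)
    ((partrec_diagMachine hU).map (Primrec.succ.comp Primrec.snd).to_comp.to₂)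
  obtain ⟨H, hH, hHlen, hHsemi⟩ := hsemi M hM
  obtain ⟨e, he⟩ := hH.partrec.exists_evalIndex_eq
  refine ⟨H ∘ unaryPad e, hH.comp (primrec_unaryPad e).to_comp,
    hHlen.comp (lengthBounded_unaryPad e), fun x => ?_⟩
  have hdiag := diagMachine_unaryPad U he x
  refine Part.eq_of_forall_mem_of_merge_succ (m := M (unaryPad e x)) ?_ ?_ (hHsemi _)
  · simpa [padBody_unaryPad, hdiag] using (hMspec (unaryPad e x)).1
  · simpa [padBody_unaryPad, hdiag] using (hMspec (unaryPad e x)).2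
end

section
/- There exists a sparse simple set: a set S of binary strings that is simple and satisfies (#{x ∈ S : |x| = n})/2^n → 0 as n → ∞. -/
open Filter

/-!
Post's construction, with a length threshold. For each `e`, dovetail the enumeration of the `e`-th
c.e. set `W_e` until some string `x` with `2e < |x|` appears, and put that single string into `S`.
Then `S` is c.e. and meets every infinite c.e. set, since such a set is some `W_e` and contains
strings longer than `2e`. A string of length `n` in `S` is selected by some `e` with `2e < n`, and
each `e` selects at most one string, so `S` has at most `n` strings of length `n`: this gives both
sparseness (`n / 2^n → 0`) and, as `n < 2^n`, the infinitude of the complement.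
-/

open Nat.Partrec (Code)
open Nat.Partrec.Code Encodable Denumerable

theorem REPred.exists_of_primrecRel {α : Type*} [Primcodable α] {p : α → ℕ → Prop}
    (hp : PrimrecRel p) : REPred fun a => ∃ n, p a n := by
  classical
  refine (Partrec.rfind (p := fun a n => Part.some (decide (p a n)))
    hp.decide.to_comp.partrec₂).dom_re.of_eq fun a => Nat.rfind_dom.trans ?_
  simp

theorem Partrec.rePred_mem_ran {α σ : Type*} [Primcodable α] [Primcodable σ] {f : α →. σ}
    (hf : Partrec f) : REPred (· ∈ f.ran) := by
  obtain ⟨c, hc⟩ := Nat.Partrec.Code.exists_code.1 hf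
  have hevaln : Primrec fun m : ℕ => evaln m.unpair.2 c m.unpair.1 :=
    primrec_evaln.comp (((Primrec.snd.comp Primrec.unpair).pair (Primrec.const c)).pair
      (Primrec.fst.comp Primrec.unpair))
  have halts : PrimrecRel fun (y : σ) (m : ℕ) => encode y ∈ evaln m.unpair.2 c m.unpair.1 :=
    Primrec.eq.comp (hevaln.comp Primrec.snd)
      ((Primrec.option_some.comp Primrec.encode).comp Primrec.fst)
  refine (REPred.exists_of_primrecRel halts).of_eq fun y => ?_
  calc (∃ m : ℕ, encode y ∈ evaln m.unpair.2 c m.unpair.1)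
      ↔ ∃ n, encode y ∈ eval c n := by
        simp only [evaln_complete]
        exact ⟨fun ⟨m, hm⟩ => ⟨_, _, hm⟩, fun ⟨n, k, h⟩ => ⟨Nat.pair n k, by simpa using h⟩⟩
    _ ↔ y ∈ f.ran := by
        simp only [hc, PFun.ran, Part.mem_bind_iff, Part.mem_coe, Part.mem_map_iff,
          encode_inj, exists_eq_right]
        exact ⟨fun ⟨_, a, _, h⟩ => ⟨a, h⟩, fun ⟨a, h⟩ => ⟨encode a, a, encodek a, h⟩⟩

theorem PFun.ncard_le_of_subset_image {α β : Type*} (f : α →. β) {s : Set α} {t : Set β}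
    (ht : t ⊆ f.image s) (hs : s.Finite) : t.ncard ≤ s.ncard := by
  rcases isEmpty_or_nonempty α with _ | _
  · simp_all [Set.eq_empty_of_isEmpty s, PFun.image_def]
  have hchoice : ∀ b ∈ t,
      Classical.epsilon (fun a => a ∈ s ∧ b ∈ f a) ∈ s ∧ b ∈ f (Classical.epsilon _) :=
    fun b hb => Classical.epsilon_spec (p := fun a => a ∈ s ∧ b ∈ f a) (ht hb)
  refine Set.ncard_le_ncard_of_injOn _ (fun b hb => (hchoice b hb).1) ?_ hs
  intro b hb b' hb' h
  have hmem := (hchoice b' hb').2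
  dsimp only at h
  rw [← h] at hmem
  exact Part.mem_unique (hchoice b hb).2 hmem

theorem Set.Infinite.exists_length_gt {α : Type*} [Finite α] {s : Set (List α)}
    (hs : s.Infinite) (n : ℕ) : ∃ x ∈ s, n < x.length := by
  by_contra! h
  exact hs ((List.finite_length_le α n).subset h)

theorem List.ncard_length_eq {α : Type*} [Fintype α] (n : ℕ) :
    {x : List α | x.length = n}.ncard = Fintype.card α ^ n := by
  rw [← Nat.card_coe_set_eq]
  exact (Nat.card_eq_fintype_card (α := List.Vector α n)).trans (card_vector n)

namespace PostSimpleSet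

def ceSet (e : ℕ) : Set (List Bool) := {x | (eval (ofNat Code e) (encode x)).Dom}

theorem exists_eq_ceSet {W : Set (List Bool)} (hW : REPred (· ∈ W)) : ∃ e, W = ceSet e := by
  obtain ⟨c, hc⟩ := Nat.Partrec.Code.exists_code.1 hW
  refine ⟨encode c, Set.ext fun x => ?_⟩
  simp [ceSet, hc, encodek, Part.assert]

def longEnumerated (e m : ℕ) : Option (List Bool) :=
  (decode m : Option (List Bool × ℕ)).bind fun xs =>
    if 2 * e < xs.1.length ∧ (evaln xs.2 (ofNat Code e) (encode xs.1)).isSome then some xs.1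
    else none

theorem primrec_longEnumerated : Primrec₂ longEnumerated := by
  have hcond : PrimrecRel fun (e : ℕ) (xs : List Bool × ℕ) =>
      2 * e < xs.1.length ∧ (evaln xs.2 (ofNat Code e) (encode xs.1)).isSome := by
    refine PrimrecPred.and ?_ ?_
    · exact Primrec.nat_lt.comp (Primrec.nat_mul.comp (Primrec.const 2) Primrec.fst)
        (Primrec.list_length.comp (Primrec.fst.comp Primrec.snd))
    · exact Primrec.eq.comp (Primrec.option_isSome.comp (primrec_evaln.comp
        (((Primrec.snd.comp Primrec.snd).pair ((Primrec.ofNat Code).comp Primrec.fst)).pair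
          (Primrec.encode.comp (Primrec.fst.comp Primrec.snd))))) (Primrec.const true)
  exact Primrec.option_bind (Primrec.decode.comp Primrec.snd)
    (Primrec.ite (hcond.comp (Primrec.fst.comp Primrec.fst) Primrec.snd)
      (Primrec.option_some.comp (Primrec.fst.comp Primrec.snd)) (Primrec.const none))

def select : ℕ →. List Bool := fun e => Nat.rfindOpt (longEnumerated e)

theorem partrec_select : Partrec select :=
  Partrec.rfindOpt primrec_longEnumerated.to_comp

theorem select_spec {e : ℕ} {x : List Bool} (h : x ∈ select e) :
    2 * e < x.length ∧ x ∈ ceSet e := by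
  obtain ⟨m, hm⟩ := Nat.rfindOpt_spec h
  simp only [longEnumerated, Option.mem_def, Option.bind_eq_some_iff,
    Option.ite_none_right_eq_some, Option.some.injEq] at hm
  obtain ⟨⟨x, s⟩, -, ⟨hlen, hhalt⟩, rfl⟩ := hm
  obtain ⟨v, hv⟩ := Option.isSome_iff_exists.1 hhalt
  exact ⟨hlen, Part.dom_iff_mem.2 ⟨v, evaln_sound hv⟩⟩

theorem select_dom {e : ℕ} {x : List Bool} (hx : x ∈ ceSet e) (hlen : 2 * e < x.length) :
    (select e).Dom := by
  obtain ⟨y, hy⟩ := Part.dom_iff_mem.1 hx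
  obtain ⟨k, hk⟩ := evaln_complete.1 hy
  refine Nat.rfindOpt_dom.2 ⟨encode (x, k), x, ?_⟩
  simp [longEnumerated, hlen, Option.mem_def.1 hk]

def postSet : Set (List Bool) := select.ran

theorem ncard_length_eq_le (n : ℕ) : {x ∈ postSet | x.length = n}.ncard ≤ n := by
  have hsub : {x ∈ postSet | x.length = n} ⊆ select.image (Set.Iio n) := by
    rintro x ⟨⟨e, he⟩, rfl⟩
    exact ⟨e, Set.mem_Iio.2 (by have := (select_spec he).1; omega), he⟩
  simpa using PFun.ncard_le_of_subset_image select hsub (Set.finite_Iio n)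

theorem rePred_mem_postSet : REPred (· ∈ postSet) :=
  partrec_select.rePred_mem_ran

theorem exists_length_eq_notMem_postSet (n : ℕ) :
    ∃ x : List Bool, x.length = n ∧ x ∉ postSet := by
  by_contra! h
  have hall : {x : List Bool | x.length = n} ⊆ {x ∈ postSet | x.length = n} :=
    fun x hx => ⟨h x hx, hx⟩
  have := (Set.ncard_le_ncard hall ((List.finite_length_eq Bool n).subset fun x hx => hx.2)).trans
    (ncard_length_eq_le n)
  rw [List.ncard_length_eq, Fintype.card_bool] at this
  exact this.not_gt n.lt_two_pow_self

theorem infinite_compl_postSet : postSetᶜ.Infinite := by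
  choose x hlen hx using exists_length_eq_notMem_postSet
  exact Set.infinite_of_injective_forall_mem (fun m n h => by rw [← hlen m, ← hlen n, h]) hx

theorem finite_of_subset_compl_postSet {W : Set (List Bool)} (hW : REPred (· ∈ W))
    (hWS : W ⊆ postSetᶜ) : W.Finite := by
  obtain ⟨e, rfl⟩ := exists_eq_ceSet hW
  by_contra hinf
  obtain ⟨x, hx, hlen⟩ := Set.Infinite.exists_length_gt hinf (2 * e)
  obtain ⟨y, hy⟩ := Part.dom_iff_mem.1 (select_dom hx hlen)
  exact hWS (select_spec hy).2 ⟨e, hy⟩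

theorem tendsto_density_postSet :
    Tendsto (fun n => ({x ∈ postSet | x.length = n}.ncard : ℝ) / 2 ^ n) atTop (nhds 0) := by
  have hlim : Tendsto (fun n : ℕ => (n : ℝ) / 2 ^ n) atTop (nhds 0) := by
    simpa [div_eq_mul_inv] using tendsto_pow_const_mul_const_pow_of_lt_one 1
      (by norm_num : (0 : ℝ) ≤ 1 / 2) (by norm_num)
  refine squeeze_zero (fun n => by positivity) (fun n => ?_) hlim
  gcongr
  exact_mod_cast ncard_length_eq_le n

end PostSimpleSet

open PostSimpleSet in
/-- there exists a sparse simple set. -/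
theorem exists_sparse_simple_set :
    ∃ S : Set (List Bool), SimpleSet S ∧
      Filter.Tendsto (fun n => (Set.ncard {x ∈ S | x.length = n} : ℝ) / 2 ^ n)
        Filter.atTop (nhds 0) :=
  ⟨postSet, ⟨rePred_mem_postSet, infinite_compl_postSet,
    fun _ => finite_of_subset_compl_postSet⟩, tendsto_density_postSet⟩
end

section
/- Fix an optimal machine U together with a code c : Nat.Partrec.Code such that U(p) = Nat.Partrec.Code.eval c (encode p) for all p. Define time(p), for p with U(p) defined, as the least k such that Nat.Partrec.Code.evaln k c (encode p) is defined; define the busy beaver function BB(n) = max { time(p) : |p| ≤ n and U(p) is defined } (with BB(n) = 0 if U halts on no string of length ≤ n), and define B(n) = max { m : K_U(m) ≤ n }. Then there is a constant d such that for all n ≥ d: B(n − d) ≤ BB(n) ≤ B(n + d). -/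
open Filter

/-!
`BB n ≤ B (n + d)`: the running time of a halting program `p` is computable from `p`, so its
complexity is at most `|p| + d`.

`B (n - d) ≤ BB n`: if `K(m) ≤ n - d` but `m > BB n`, run `c` for `m` steps on every input and
add one to the sum of the outputs. The result has complexity at most `n`, yet no program of length
`≤ n` outputs it, because each of them halts within `BB n < m` steps.
-/

open Nat.Partrec Code

section Complexity

variable {U : List Bool →. ℕ}

theorem KU_le_of_mem {m : ℕ} {p : List Bool} (h : m ∈ U p) : KU U m ≤ p.length :=
  sInf_le ⟨p, h, rfl⟩

theorem KU_le_iff {m N : ℕ} : KU U m ≤ N ↔ ∃ p : List Bool, p.length ≤ N ∧ m ∈ U p := by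
  refine ⟨fun h => ?_, fun ⟨p, hp, hm⟩ => (KU_le_of_mem hm).trans (by exact_mod_cast hp)⟩
  have hne : {l : ℕ∞ | ∃ p : List Bool, m ∈ U p ∧ (p.length : ℕ∞) = l}.Nonempty := by
    by_contra hempty
    simp [KU, Set.not_nonempty_iff_eq_empty.1 hempty] at h
  obtain ⟨p, hm, hp⟩ := csInf_mem hne
  exact ⟨p, by exact_mod_cast hp.trans_le h, hm⟩

theorem bddAbove_setOf_KU_le (N : ℕ) : BddAbove {m : ℕ | KU U m ≤ N} := by
  have hfin : (⋃ p ∈ {p : List Bool | p.length ≤ N}, {m | m ∈ U p}).Finite :=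
    (List.finite_length_le Bool N).biUnion fun p _ =>
      Set.Subsingleton.finite fun _ ha _ hb => Part.mem_unique ha hb
  refine (hfin.subset fun m hm => ?_).bddAbove
  obtain ⟨p, hp, hm⟩ := KU_le_iff.1 hm
  exact Set.mem_biUnion hp hm

theorem le_Bfun {m N : ℕ} (h : KU U m ≤ N) : m ≤ Bfun U N :=
  le_csSup (bddAbove_setOf_KU_le N) h

theorem OptimalMachine.exists_KU_le_add (hU : OptimalMachine U) {V : List Bool →. ℕ}
    (hV : Partrec V) : ∃ d : ℕ, ∀ m N : ℕ, KU V m ≤ N → KU U m ≤ N + d := by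
  obtain ⟨d, hd⟩ := hU.2 V hV
  exact ⟨d, fun m N h => by simpa using (hd m).trans (by gcongr)⟩

theorem OptimalMachine.exists_KU_map_le_add (hU : OptimalMachine U) {f : ℕ → ℕ}
    (hf : Computable f) : ∃ d : ℕ, ∀ m N : ℕ, KU U m ≤ N → KU U (f m) ≤ N + d := by
  obtain ⟨d, hd⟩ := hU.exists_KU_le_add (V := fun p => (U p).map f) (hU.1.map (hf.comp .snd).to₂)
  refine ⟨d, fun m N h => hd _ _ ?_⟩
  obtain ⟨p, hp, hm⟩ := KU_le_iff.1 h
  exact KU_le_iff.2 ⟨p, hp, Part.mem_map f hm⟩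

end Complexity

section RunningTime

variable {c : Code} {p : List Bool}

theorem isSome_evaln_compTime (h : (c.eval (Encodable.encode p)).Dom) :
    (evaln (compTime c p) c (Encodable.encode p)).isSome := by
  obtain ⟨k, hk⟩ := evaln_complete.1 (Part.get_mem h)
  exact Nat.sInf_mem (s := {k | (evaln k c (Encodable.encode p)).isSome})
    ⟨k, Option.isSome_iff_exists.2 ⟨_, hk⟩⟩

theorem mem_evaln_of_compTime_le {v k : ℕ} (hv : v ∈ c.eval (Encodable.encode p))
    (hk : compTime c p ≤ k) : v ∈ evaln k c (Encodable.encode p) := by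
  obtain ⟨w, hw⟩ :=
    Option.isSome_iff_exists.1 (isSome_evaln_compTime (Part.dom_iff_mem.2 ⟨v, hv⟩))
  obtain rfl : w = v := Part.mem_unique (evaln_sound hw) hv
  exact evaln_mono hk hw

def timeMachine (c : Code) : List Bool →. ℕ :=
  fun p => Nat.rfind fun k => Part.some (evaln k c (Encodable.encode p)).isSome

theorem timeMachine_partrec (c : Code) : Partrec (timeMachine c) :=
  Partrec.rfind <| Computable₂.partrec₂ <| Primrec.to_comp <| Primrec.option_isSome.comp <|
    primrec_evaln.comp ((Primrec.snd.pair (Primrec.const c)).pair (Primrec.encode.comp .fst))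

theorem compTime_mem_timeMachine (h : (c.eval (Encodable.encode p)).Dom) :
    compTime c p ∈ timeMachine c p := by
  refine Nat.mem_rfind.2 ⟨Part.mem_some_iff.2 (isSome_evaln_compTime h).symm, fun hk => ?_⟩
  simpa using Nat.notMem_of_lt_sInf hk

/-- Since `evaln k c e = none` for `e ≥ k`, this exceeds every output of `c` within `k` steps. -/
def evalnOutputBound (c : Code) (k : ℕ) : ℕ :=
  ((List.range k).map fun e => (evaln k c e).getD 0).sum + 1

theorem evalnOutputBound_primrec (c : Code) : Primrec (evalnOutputBound c) := by
  have hout : Primrec₂ fun k e : ℕ => (evaln k c e).getD 0 :=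
    Primrec.option_getD.comp (primrec_evaln.comp ((Primrec.fst.pair (.const c)).pair .snd))
      (.const 0)
  have hsum : Primrec fun k => ((List.range k).map fun e => (evaln k c e).getD 0).foldr (· + ·) 0 :=
    Primrec.list_foldr (Primrec.list_map .list_range hout) (.const 0)
      (Primrec.nat_add.comp (Primrec.fst.comp .snd) (Primrec.snd.comp .snd)).to₂
  exact Primrec.succ.comp (hsum.of_eq fun _ => List.sum_eq_foldr.symm)

theorem lt_evalnOutputBound {k e v : ℕ} (h : v ∈ evaln k c e) : v < evalnOutputBound c k :=
  Nat.lt_succ_of_le <| List.le_sum_of_mem <| List.mem_map.2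
    ⟨e, List.mem_range.2 (evaln_bound h), by simp [Option.mem_def.1 h]⟩

end RunningTime

section BusyBeaver

variable {U : List Bool →. ℕ} {c : Code}

theorem compTime_le_BB {p : List Bool} {n : ℕ} (hp : p.length ≤ n) (hU : (U p).Dom) :
    compTime c p ≤ BB U c n := by
  refine le_csSup (Set.Finite.bddAbove ?_) ⟨p, hp, hU, rfl⟩
  refine ((List.finite_length_le Bool n).image (compTime c)).subset ?_
  rintro t ⟨q, hq, -, rfl⟩
  exact ⟨q, hq, rfl⟩

theorem lt_KU_evalnOutputBound (hc : ∀ p : List Bool, U p = c.eval (Encodable.encode p))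
    {n k : ℕ} (hk : BB U c n < k) : n < KU U (evalnOutputBound c k) := by
  refine lt_of_not_ge fun h => ?_
  obtain ⟨p, hp, hout⟩ := KU_le_iff.1 h
  have hmem := mem_evaln_of_compTime_le ((hc p) ▸ hout)
    ((compTime_le_BB hp (Part.dom_iff_mem.2 ⟨_, hout⟩)).trans hk.le)
  exact (lt_evalnOutputBound hmem).false

end BusyBeaver

/-- the busy beaver function of an optimal machine coincides, up to an
`O(1)` shift of the argument, with the largest number of complexity at most `n`. -/
theorem busy_beaver_vs_B (U : List Bool →. ℕ) (hU : OptimalMachine U)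
    (c : Nat.Partrec.Code)
    (hc : ∀ p : List Bool, U p = c.eval (Encodable.encode p)) :
    ∃ d : ℕ, ∀ n ≥ d, Bfun U (n - d) ≤ BB U c n ∧ BB U c n ≤ Bfun U (n + d) := by
  obtain ⟨dB, hdB⟩ := hU.exists_KU_map_le_add (evalnOutputBound_primrec c).to_comp
  obtain ⟨dT, hdT⟩ := hU.exists_KU_le_add (timeMachine_partrec c)
  refine ⟨dB + dT, fun n hn => ⟨csSup_le' fun m hm => ?_, csSup_le' ?_⟩⟩
  · by_contra! hm_gt
    refine (lt_KU_evalnOutputBound hc hm_gt).not_ge ((hdB m _ hm).trans ?_)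
    exact_mod_cast (by omega : n - (dB + dT) + dB ≤ n)
  · rintro t ⟨p, hp, hdom, rfl⟩
    refine le_Bfun ((hdT _ _ (KU_le_of_mem (compTime_mem_timeMachine ((hc p) ▸ hdom)))).trans ?_)
    exact_mod_cast (by omega : p.length + dT ≤ n + (dB + dT))
end

section
/- Let U be an effectively optimal machine and set A = {x : U(x) = 0} and B = {x : U(x) = 1}. Then A and B are disjoint, there is no total computable f : List Bool → Bool with f(x) = false for all x ∈ A and f(x) = true for all x ∈ B, and moreover for every partial computable h : List Bool →. Bool there is a real ε > 0 and an N such that E_n(h) ≥ ε for all n ≥ N (so liminf_{n→∞} E_n(h) > 0), where E_n(h) = (#{x : |x| ≤ n and (h(x) is undefined, or x ∈ A and h(x) = true, or x ∈ B and h(x) = false)})/2^{n+1}. -/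
open Filter

/-!
By effective optimality, `U` simulates with constant loss in length the machine `V` which, on
input `z = 1^e 0 x`, reads `e` as a code of a total function `g` and runs it on `z` and on every
`w` with `encode w < encode z` and `e` leading ones; it outputs `encode z + 2` if
`g w = g z` for one of them, and otherwise `0` or `1` according as `h (g z)` is `true` or `false`.
Let `e` code the very translator `g` with `U ∘ g = V`. A collision `g w = g z` would then force
`V w = V z = encode z + 2`, whereas `V w` is `0`, `1` or `encode w + 2`; so `x ↦ g (1^e 0 x)` is
injective, and each `g (1^e 0 x)` is an error of `h`. As `g` lengthens strings by at most a
constant, a fixed fraction of the strings of length at most `n` are errors. A total separator has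
no errors at all.
-/

namespace CoarseInseparability

open Encodable Nat.Partrec Nat.Partrec.Code

theorem _root_.Primrec.list_filterMap {α β σ : Type*} [Primcodable α] [Primcodable β]
    [Primcodable σ] {f : α → List β} {g : α → β → Option σ} (hf : Primrec f)
    (hg : Primrec₂ g) : Primrec fun a => (f a).filterMap (g a) := by
  have hstep : Primrec₂ fun (a : α) (p : β × List σ) => ((g a p.1).toList ++ p.2) :=
    (Primrec.list_append.comp
      (Primrec.option_casesOn (hg.comp Primrec.fst (Primrec.fst.comp Primrec.snd))
        (Primrec.const []) (Primrec.list_cons.comp Primrec.snd (Primrec.const [])).to₂)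
      (Primrec.snd.comp Primrec.snd)).to₂.of_eq fun a p => by cases g a p.1 <;> rfl
  refine (Primrec.list_foldr hf (Primrec.const []) hstep).of_eq fun a => ?_
  induction f a with
  | nil => rfl
  | cons b l ih => cases hb : g a b <;> simp [hb, ih]

theorem _root_.Primrec.list_all {α β : Type*} [Primcodable α] [Primcodable β]
    {f : α → List β} {p : α → β → Bool} (hf : Primrec f) (hp : Primrec₂ p) :
    Primrec fun a => (f a).all (p a) := by
  refine (Primrec.list_foldr hf (Primrec.const true)
    (Primrec.and.comp (hp.comp Primrec.fst (Primrec.fst.comp Primrec.snd))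
      (Primrec.snd.comp Primrec.snd)).to₂).of_eq fun a => ?_
  induction f a with
  | nil => rfl
  | cons b l ih => simp [ih]

theorem _root_.Primrec.list_any {α β : Type*} [Primcodable α] [Primcodable β]
    {f : α → List β} {p : α → β → Bool} (hf : Primrec f) (hp : Primrec₂ p) :
    Primrec fun a => (f a).any (p a) := by
  refine (Primrec.list_foldr hf (Primrec.const false)
    (Primrec.or.comp (hp.comp Primrec.fst (Primrec.fst.comp Primrec.snd))
      (Primrec.snd.comp Primrec.snd)).to₂).of_eq fun a => ?_
  induction f a with
  | nil => rfl
  | cons b l ih => simp [ih]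

def unaryPrefix (e : ℕ) (x : List Bool) : List Bool := List.replicate e true ++ false :: x

def leadingOnes (z : List Bool) : ℕ := (z.takeWhile id).length

@[simp] theorem leadingOnes_unaryPrefix (e : ℕ) (x : List Bool) :
    leadingOnes (unaryPrefix e x) = e := by
  induction e with
  | zero => rfl
  | succ e ih => simp_all [leadingOnes, unaryPrefix, List.replicate_succ]

@[simp] theorem length_unaryPrefix (e : ℕ) (x : List Bool) :
    (unaryPrefix e x).length = x.length + e + 1 := by
  simp only [unaryPrefix, List.length_append, List.length_replicate, List.length_cons]
  omega

theorem unaryPrefix_injective (e : ℕ) : Function.Injective (unaryPrefix e) := by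
  intro x y hxy
  simpa [unaryPrefix] using hxy

theorem primrec_leadingOnes : Primrec leadingOnes :=
  Primrec.list_length.comp (Primrec.list_takeWhile Primrec.id)

section Simulation

variable {α β : Type*} [Encodable α] [Encodable β]

def haltsOnAll (c : Code) (k : ℕ) (l : List α) : Bool :=
  l.all fun w => (evaln k c (encode w)).isSome

variable {g : α → β} {c : Code}

theorem exists_haltsOnAll (hc : ∀ w, encode (g w) ∈ eval c (encode w)) (l : List α) :
    ∃ k, haltsOnAll c k l = true := by
  induction l with
  | nil => exact ⟨0, rfl⟩
  | cons a l ih =>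
    obtain ⟨k₁, hk₁⟩ := ih
    obtain ⟨k₂, hk₂⟩ := evaln_complete.1 (hc a)
    refine ⟨max k₁ k₂, ?_⟩
    simp only [haltsOnAll, List.all_cons, List.all_eq_true, Bool.and_eq_true,
      Option.isSome_iff_exists] at hk₁ ⊢
    refine ⟨⟨_, evaln_mono (le_max_right _ _) hk₂⟩, fun w hw => ?_⟩
    obtain ⟨v, hv⟩ := hk₁ w hw
    exact ⟨v, evaln_mono (le_max_left _ _) hv⟩

theorem evaln_eq_of_haltsOnAll (hc : ∀ w, encode (g w) ∈ eval c (encode w)) {k : ℕ}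
    {l : List α} (hk : haltsOnAll c k l = true) {w : α} (hw : w ∈ l) :
    evaln k c (encode w) = some (encode (g w)) := by
  obtain ⟨v, hv⟩ := Option.isSome_iff_exists.1 (List.all_eq_true.1 hk w hw)
  rw [hv, Part.mem_unique (evaln_sound hv) (hc w)]

end Simulation

def codeOf (z : List Bool) : Code := Denumerable.ofNat Code (leadingOnes z)

@[simp] theorem codeOf_unaryPrefix (c : Code) (x : List Bool) :
    codeOf (unaryPrefix (encode c) x) = c := by
  simp [codeOf]

def earlier {α : Type*} [Encodable α] (a : α) : List α :=
  (List.range (encode a)).filterMap (decode₂ α)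

theorem mem_earlier {α : Type*} [Encodable α] {a b : α} :
    b ∈ earlier a ↔ encode b < encode a := by
  simp [earlier, Encodable.decode₂_eq_some]

def collides (c : Code) (k : ℕ) (z : List Bool) : Bool :=
  (earlier z).any fun w =>
    decide (leadingOnes w = leadingOnes z) &&
      decide (evaln k c (encode w) = evaln k c (encode z))

def simulatedOutput (c : Code) (k : ℕ) (z : List Bool) : List Bool :=
  ((evaln k c (encode z)).bind (decode₂ (List Bool))).getD []

def diagonalMachine (h : List Bool →. Bool) (z : List Bool) : Part ℕ :=
  (Nat.rfind fun k => Part.some (haltsOnAll (codeOf z) k (z :: earlier z))).bind fun k =>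
    cond (collides (codeOf z) k z) (Part.some (encode z + 2))
      ((h (simulatedOutput (codeOf z) k z)).map fun b => cond b 0 1)

theorem diagonalMachine_eq {g : List Bool → List Bool} {c : Code}
    (hc : ∀ w, encode (g w) ∈ eval c (encode w)) (h : List Bool →. Bool) {z : List Bool}
    (hz : codeOf z = c) :
    diagonalMachine h z =
      if ∃ w ∈ earlier z, leadingOnes w = leadingOnes z ∧ g w = g z then
        Part.some (encode z + 2)
      else (h (g z)).map fun b => cond b 0 1 := by
  obtain ⟨k₀, hk₀⟩ := exists_haltsOnAll hc (z :: earlier z)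
  obtain ⟨k, hk, -⟩ := Nat.rfind_min' (p := fun k => haltsOnAll c k (z :: earlier z)) hk₀
  have hhalt : haltsOnAll c k (z :: earlier z) = true := by simpa using Nat.rfind_spec hk
  have heval : ∀ w ∈ z :: earlier z, evaln k c (encode w) = some (encode (g w)) :=
    fun w hw => evaln_eq_of_haltsOnAll hc hhalt hw
  have hcollides : collides c k z =
      decide (∃ w ∈ earlier z, leadingOnes w = leadingOnes z ∧ g w = g z) := by
    rw [Bool.eq_iff_iff, decide_eq_true_iff]
    simp only [collides, List.any_eq_true, Bool.and_eq_true, decide_eq_true_eq,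
      heval z List.mem_cons_self]
    refine exists_congr fun w => and_congr_right fun hw => ?_
    rw [heval w (List.mem_cons_of_mem _ hw), Option.some_inj, encode_inj]
  have houtput : simulatedOutput c k z = g z := by
    simp [simulatedOutput, heval z List.mem_cons_self]
  have hrfind : (Nat.rfind fun k => Part.some (haltsOnAll c k (z :: earlier z))) = Part.some k :=
    Part.eq_some_iff.2 hk
  rw [diagonalMachine, hz, hrfind, Part.bind_some, hcollides, houtput, Bool.cond_decide]

section Computability

open Primrec

theorem primrec_earlier {α : Type*} [Primcodable α] : Primrec (earlier : α → List α) :=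
  list_filterMap (list_range.comp Primrec.encode) (Primrec.decode₂.comp snd).to₂

theorem primrec_codeOf : Primrec codeOf :=
  (Primrec.ofNat Code).comp primrec_leadingOnes

theorem primrec₂_evaln_codeOf :
    Primrec₂ fun (p : List Bool × ℕ) (w : List Bool) => evaln p.2 (codeOf p.1) (encode w) :=
  primrec_evaln.comp (((snd.comp fst).pair (primrec_codeOf.comp (fst.comp fst))).pair
    (Primrec.encode.comp snd))

theorem primrec₂_haltsOnAll :
    Primrec₂ fun (z : List Bool) (k : ℕ) => haltsOnAll (codeOf z) k (z :: earlier z) :=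
  list_all (list_cons.comp fst (primrec_earlier.comp fst))
    (option_isSome.comp primrec₂_evaln_codeOf).to₂

theorem primrec₂_collides : Primrec₂ fun (z : List Bool) (k : ℕ) => collides (codeOf z) k z :=
  list_any (primrec_earlier.comp fst)
    (Primrec.and.comp
      (Primrec.eq.comp (primrec_leadingOnes.comp snd)
        (primrec_leadingOnes.comp (fst.comp fst))).decide
      (Primrec.eq.comp primrec₂_evaln_codeOf
        (primrec₂_evaln_codeOf.comp fst (fst.comp fst))).decide).to₂

theorem primrec₂_simulatedOutput :
    Primrec₂ fun (z : List Bool) (k : ℕ) => simulatedOutput (codeOf z) k z :=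
  option_getD.comp
    (option_bind (primrec₂_evaln_codeOf.comp Primrec.id fst) (Primrec.decode₂.comp snd).to₂)
    (const [])

theorem partrec_diagonalMachine {h : List Bool →. Bool} (hh : Partrec h) :
    Partrec (diagonalMachine h) :=
  (Partrec.rfind primrec₂_haltsOnAll.to_comp.partrec₂).bind
    (Partrec.cond primrec₂_collides.to_comp
      (Computable.succ.comp (Computable.succ.comp (Computable.encode.comp Computable.fst))).partrec
      ((hh.comp primrec₂_simulatedOutput.to_comp).map
        ((Primrec.dom_bool fun b => cond b 0 1).to_comp.comp Computable.snd).to₂)).to₂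

end Computability

def SeparationError (U : List Bool →. ℕ) (h : List Bool →. Bool) (x : List Bool) : Prop :=
  ¬(h x).Dom ∨ (0 ∈ U x ∧ true ∈ h x) ∨ (1 ∈ U x ∧ false ∈ h x)

theorem separationError_of_eq_map {U : List Bool →. ℕ} {h : List Bool →. Bool} {y : List Bool}
    (hy : U y = (h y).map fun b => cond b 0 1) : SeparationError U h y := by
  rw [SeparationError, hy]
  by_cases hdom : (h y).Dom
  · obtain ⟨b, hb⟩ := Part.dom_iff_mem.1 hdom
    cases b
    · exact Or.inr (Or.inr ⟨Part.mem_map _ hb, hb⟩)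
    · exact Or.inr (Or.inl ⟨Part.mem_map _ hb, hb⟩)
  · exact Or.inl hdom

section Translator

variable {U : List Bool →. ℕ} {h : List Bool →. Bool} {g : List Bool → List Bool} {c : Code}

theorem apply_ne_of_mem_earlier (hgU : ∀ z, U (g z) = diagonalMachine h z)
    (hc : ∀ w, encode (g w) ∈ eval c (encode w)) {z w : List Bool} (hz : codeOf z = c)
    (hwz : w ∈ earlier z) (hlead : leadingOnes w = leadingOnes z) : g w ≠ g z := by
  intro heq
  have hUz : U (g z) = Part.some (encode z + 2) := by
    rw [hgU, diagonalMachine_eq hc h hz, if_pos ⟨w, hwz, hlead, heq⟩]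
  have hmem : encode z + 2 ∈ diagonalMachine h w := by
    rw [← hgU, heq, hUz]
    exact Part.mem_some _
  rw [diagonalMachine_eq hc h ((congrArg _ hlead).trans hz)] at hmem
  split_ifs at hmem
  · have := mem_earlier.1 hwz
    rw [Part.mem_some_iff] at hmem
    omega
  · obtain ⟨b, -, hb⟩ := (Part.mem_map_iff _).1 hmem
    cases b <;> simp at hb

theorem injective_apply_unaryPrefix (hgU : ∀ z, U (g z) = diagonalMachine h z)
    (hc : ∀ w, encode (g w) ∈ eval c (encode w)) :
    Function.Injective fun x => g (unaryPrefix (encode c) x) := by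
  intro x y hxy
  by_contra hne
  rcases lt_or_gt_of_ne (encode_injective.ne ((unaryPrefix_injective _).ne hne)) with hlt | hlt
  · exact apply_ne_of_mem_earlier hgU hc (codeOf_unaryPrefix c y) (mem_earlier.2 hlt)
      (by simp) hxy
  · exact apply_ne_of_mem_earlier hgU hc (codeOf_unaryPrefix c x) (mem_earlier.2 hlt)
      (by simp) hxy.symm

theorem separationError_apply_unaryPrefix (hgU : ∀ z, U (g z) = diagonalMachine h z)
    (hc : ∀ w, encode (g w) ∈ eval c (encode w)) (x : List Bool) :
    SeparationError U h (g (unaryPrefix (encode c) x)) := by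
  refine separationError_of_eq_map ?_
  rw [hgU, diagonalMachine_eq hc h (codeOf_unaryPrefix c x), if_neg]
  rintro ⟨w, hw, hlead, hwx⟩
  exact apply_ne_of_mem_earlier hgU hc (codeOf_unaryPrefix c x) hw hlead hwx

end Translator

theorem exists_injective_lengthBounded_separationError {U : List Bool →. ℕ} (hU : EffOptimal U)
    {h : List Bool →. Bool} (hh : Partrec h) :
    ∃ f : List Bool → List Bool, Function.Injective f ∧ LengthBounded f ∧
      ∀ x, SeparationError U h (f x) := by
  obtain ⟨g, hg, ⟨d, hgd⟩, hgU⟩ := hU.2 _ (partrec_diagonalMachine hh)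
  obtain ⟨c, hcg⟩ := exists_code.1 hg
  have hc : ∀ w, encode (g w) ∈ eval c (encode w) := by simp [hcg, encodek]
  refine ⟨fun x => g (unaryPrefix (encode c) x), injective_apply_unaryPrefix hgU hc,
    ⟨d + encode c + 1, fun x => ?_⟩, separationError_apply_unaryPrefix hgU hc⟩
  have := hgd (unaryPrefix (encode c) x)
  rw [length_unaryPrefix] at this
  exact this.trans_eq (by ring)

theorem ncard_setOf_length_eq (m : ℕ) : {x : List Bool | x.length = m}.ncard = 2 ^ m := by
  rw [← Nat.card_coe_set_eq,
    show Nat.card {x : List Bool | x.length = m} = Nat.card (Fin m → Bool) from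
      Nat.card_congr (Equiv.vectorEquivFin Bool m)]
  simp

theorem exists_pos_le_density_of_injective {P : List Bool → Prop} {f : List Bool → List Bool}
    (hf : Function.Injective f) (hb : LengthBounded f) (hP : ∀ x, P (f x)) :
    ∃ ε : ℝ, 0 < ε ∧ ∃ N : ℕ, ∀ n ≥ N,
      ε ≤ (Set.ncard {y : List Bool | y.length ≤ n ∧ P y} : ℝ) / 2 ^ (n + 1) := by
  obtain ⟨c, hc⟩ := hb
  refine ⟨1 / 2 ^ (c + 1), by positivity, c, fun n hn => ?_⟩
  set S := {y : List Bool | y.length ≤ n ∧ P y}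
  have hsub : f '' {x | x.length = n - c} ⊆ S := by
    rintro _ ⟨x, hx : x.length = n - c, rfl⟩
    exact ⟨by have := hc x; omega, hP x⟩
  have hcard : 2 ^ (n - c) ≤ S.ncard := by
    calc 2 ^ (n - c) = (f '' {x | x.length = n - c}).ncard := by
          rw [Set.ncard_image_of_injective _ hf, ncard_setOf_length_eq]
      _ ≤ S.ncard :=
          Set.ncard_le_ncard hsub ((List.finite_length_le Bool n).subset fun _ hy => hy.1)
  rw [div_le_div_iff₀ (by positivity) (by positivity), one_mul]
  calc (2 : ℝ) ^ (n + 1) = 2 ^ (n - c) * 2 ^ (c + 1) := by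
        rw [← pow_add]; congr 1; omega
    _ ≤ S.ncard * 2 ^ (c + 1) := by gcongr; exact_mod_cast hcard

end CoarseInseparability

open CoarseInseparability

/-- the sets of programs of an effectively optimal machine producing 0 and 1
are disjoint, computably inseparable, and every partial computable separator has
liminf error density bounded away from 0. -/
theorem coarse_inseparability (U : List Bool →. ℕ) (hU : EffOptimal U) :
    Disjoint {x : List Bool | 0 ∈ U x} {x : List Bool | 1 ∈ U x} ∧
    (¬ ∃ f : List Bool → Bool, Computable f ∧
      (∀ x, 0 ∈ U x → f x = false) ∧ (∀ x, 1 ∈ U x → f x = true)) ∧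
    (∀ h : List Bool →. Bool, Partrec h → ∃ ε : ℝ, 0 < ε ∧ ∃ N : ℕ, ∀ n ≥ N,
      ε ≤ (Set.ncard {x : List Bool | x.length ≤ n ∧
            (¬(h x).Dom ∨ (0 ∈ U x ∧ true ∈ h x) ∨ (1 ∈ U x ∧ false ∈ h x))} : ℝ)
          / 2 ^ (n + 1)) := by
  have hdensity : ∀ h : List Bool →. Bool, Partrec h →
      ∃ ε : ℝ, 0 < ε ∧ ∃ N : ℕ, ∀ n ≥ N,
        ε ≤ (Set.ncard {x | x.length ≤ n ∧ SeparationError U h x} : ℝ) / 2 ^ (n + 1) :=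
    fun h hh =>
      let ⟨_, hf, hb, herr⟩ := exists_injective_lengthBounded_separationError hU hh
      exists_pos_le_density_of_injective hf hb herr
  refine ⟨Set.disjoint_left.2 fun x h0 h1 => absurd (Part.mem_unique h0 h1) zero_ne_one,
    fun ⟨f, hf, hf0, hf1⟩ => ?_, hdensity⟩
  obtain ⟨ε, hε, N, hN⟩ := hdensity (fun x => Part.some (f x)) hf
  have hnone : ∀ x, ¬SeparationError U (fun x => Part.some (f x)) x := by
    rintro x (hdom | ⟨h0, ht⟩ | ⟨h1, hf'⟩)
    · exact hdom trivial
    · simp [hf0 x h0] at ht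
    · simp [hf1 x h1] at hf'
  simpa [hnone] using (hε.trans_le (hN N le_rfl))
end
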